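/- arXiv:2204.11640 — 5 statements merged into one kernel-verified Lean document; each statement's English description precedes it below -/
import Mathlib

section
/- Theorem 4 (upper bound of recovery error and linear convergence for HLISTA-CP). Assume μ := μ(A) > 0, let S ⊆ {1, …, N} with 2 ≤ |S|, 2|S| ≤ N and |S| < (2 + 1/μ)/4, let B_x > 0, let x* ∈ X(B_x, S), and set b = A x*. Let sequences x, v, u, w : ℕ → ℝ^N satisfy x⁰ = 0 and, for every n: W̄ⁿ, Ŵⁿ ∈ W_s(A); θ₁ⁿ = μ‖xⁿ − x*‖₁ and vⁿ = S_{θ₁ⁿ}(xⁿ + (W̄ⁿ)ᵀ(b − Axⁿ)); uⁿ ∈ ℝ^N arbitrary; θ₂ⁿ = μ‖uⁿ − x*‖₁ + μ((N − |S|)/(|S| − 1))·‖uⁿ‖₁ and wⁿ = S_{θ₂ⁿ}(uⁿ + (Ŵⁿ)ᵀ(b − Auⁿ)); and xⁿ⁺¹ = αⁿvⁿ + (1 − αⁿ)wⁿ, where θ₂ⁿ/(θ₁ⁿ + θ₂ⁿ) ≤ αⁿ < 1 if θ₁ⁿ ≠ 0 and αⁿ = 1 if θ₁ⁿ = 0.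 Then for every n ∈ ℕ: supp(xⁿ) ⊆ S and ‖xⁿ − x*‖₂ ≤ |S|·B_x·exp(−c·n), where c = −log(4μ|S| − 2μ) > 0. -/
open scoped Classical

/-- The Euclidean (ℓ²) norm on `Fin n → ℝ`. -/
noncomputable def l2norm {n : ℕ} (x : Fin n → ℝ) : ℝ := Real.sqrt (∑ i, (x i) ^ 2)

/-- The ℓ¹ norm on `Fin n → ℝ`. -/
noncomputable def l1norm {n : ℕ} (x : Fin n → ℝ) : ℝ := ∑ i, |x i|

/-- Componentwise soft-thresholding: `S_θ(z)ᵢ = sgn(zᵢ) * max (|zᵢ| - θ) 0`. -/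
noncomputable def soft {n : ℕ} (θ : ℝ) (z : Fin n → ℝ) : Fin n → ℝ :=
  fun i => Real.sign (z i) * max (|z i| - θ) 0

/-- `max_{i ≠ j} |WᵢᵀAⱼ|`, where `Wᵢ`, `Aⱼ` are columns. -/
noncomputable def mutualMax {m n : ℕ} (A W : Matrix (Fin m) (Fin n) ℝ) : ℝ :=
  sSup {c : ℝ | ∃ i j : Fin n, i ≠ j ∧ c = |∑ k, W k i * A k j|}

/-- Generalized mutual coherence `μ(A)`: the infimum of `max_{i≠j} |WᵢᵀAⱼ|` over all
matrices `W` with `WᵢᵀAᵢ = 1` for all `i`. -/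
noncomputable def gmc {m n : ℕ} (A : Matrix (Fin m) (Fin n) ℝ) : ℝ :=
  sInf {c : ℝ | ∃ W : Matrix (Fin m) (Fin n) ℝ,
    (∀ i, (∑ k, W k i * A k i) = 1) ∧ c = mutualMax A W}

/-- `W ∈ W_s(A)`: `WᵢᵀAᵢ = 1` for all `i`, and `W` attains the infimum defining `μ(A)`. -/
def memWs {m n : ℕ} (A W : Matrix (Fin m) (Fin n) ℝ) : Prop :=
  (∀ i, (∑ k, W k i * A k i) = 1) ∧ mutualMax A W = gmc A

/- ------------------ auxiliary lemmas ------------------ -/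

lemma l2_le_l1 {n : ℕ} (x : Fin n → ℝ) : l2norm x ≤ l1norm x := by
  unfold l2norm l1norm
  have h1 : ∑ i, (x i) ^ 2 ≤ (∑ i, |x i|) ^ 2 := by
    have := Finset.sum_sq_le_sq_sum_of_nonneg
      (f := fun i => |x i|) (s := (Finset.univ : Finset (Fin n)))
      (fun i _ => abs_nonneg _)
    simpa [sq_abs] using this
  calc Real.sqrt (∑ i, (x i) ^ 2) ≤ Real.sqrt ((∑ i, |x i|) ^ 2) := Real.sqrt_le_sqrt h1
    _ = ∑ i, |x i| := Real.sqrt_sq (Finset.sum_nonneg fun i _ => abs_nonneg _)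

lemma soft_eq_zero {n : ℕ} {θ : ℝ} {z : Fin n → ℝ} {i : Fin n} (h : |z i| ≤ θ) :
    soft θ z i = 0 := by
  unfold soft
  rw [max_eq_right (by linarith), mul_zero]

lemma abs_soft_sub_le {n : ℕ} {θ : ℝ} (hθ : 0 ≤ θ) (z : Fin n → ℝ) (i : Fin n) :
    |soft θ z i - z i| ≤ θ := by
  unfold soft
  rcases le_or_gt |z i| θ with h | h
  · rw [max_eq_right (by linarith), mul_zero]
    simpa using h
  · rw [max_eq_left (by linarith)]
    rcases lt_trichotomy (z i) 0 with hz | hz | hz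
    · rw [Real.sign_of_neg hz, abs_of_neg hz]
      have heq : (-1 : ℝ) * (-(z i) - θ) - z i = θ := by ring
      rw [heq, abs_of_nonneg hθ]
    · exfalso; rw [hz, abs_zero] at h; linarith
    · rw [Real.sign_of_pos hz, abs_of_pos hz]
      have heq : (1 : ℝ) * (z i - θ) - z i = -θ := by ring
      rw [heq, abs_neg, abs_of_nonneg hθ]

lemma memWs_abs_le {M N : ℕ} (A W : Matrix (Fin M) (Fin N) ℝ) (h : memWs A W)
    {i j : Fin N} (hij : i ≠ j) : |∑ k, W k i * A k j| ≤ gmc A := by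
  rw [← h.2]
  unfold mutualMax
  apply le_csSup
  · have hsub : {c : ℝ | ∃ i j : Fin N, i ≠ j ∧ c = |∑ k, W k i * A k j|} ⊆
        Set.range (fun p : Fin N × Fin N => |∑ k, W k p.1 * A k p.2|) := by
      rintro c ⟨i, j, _, rfl⟩
      exact ⟨(i, j), rfl⟩
    exact ((Set.finite_range _).subset hsub).bddAbove
  · exact ⟨i, j, hij, rfl⟩

lemma step_coord {M N : ℕ} (A W : Matrix (Fin M) (Fin N) ℝ)
    (hGd : ∀ i, (∑ k, W k i * A k i) = 1)
    (hG : ∀ i j : Fin N, i ≠ j → |∑ k, W k i * A k j| ≤ gmc A)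
    (xstar y : Fin N → ℝ) (i : Fin N) :
    |(y + W.transpose.mulVec (A.mulVec xstar - A.mulVec y)) i - xstar i|
      ≤ gmc A * ∑ j ∈ Finset.univ.erase i, |y j - xstar j| := by
  have h1 : W.transpose.mulVec (A.mulVec xstar - A.mulVec y) i
      = ∑ j, (∑ k, W k i * A k j) * (xstar j - y j) := by
    simp only [Matrix.mulVec, dotProduct, Matrix.transpose_apply, Pi.sub_apply]
    calc ∑ k, W k i * ((∑ j, A k j * xstar j) - (∑ j, A k j * y j))
        = ∑ k, ∑ j, (W k i * A k j) * (xstar j - y j) := by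
          refine Finset.sum_congr rfl fun k _ => ?_
          rw [← Finset.sum_sub_distrib, Finset.mul_sum]
          exact Finset.sum_congr rfl fun j _ => by ring
      _ = ∑ j, ∑ k, (W k i * A k j) * (xstar j - y j) := Finset.sum_comm
      _ = ∑ j, (∑ k, W k i * A k j) * (xstar j - y j) :=
          Finset.sum_congr rfl fun j _ => (Finset.sum_mul _ _ _).symm
  have h2 : (y + W.transpose.mulVec (A.mulVec xstar - A.mulVec y)) i - xstar i
      = ∑ j ∈ Finset.univ.erase i, (∑ k, W k i * A k j) * (xstar j - y j) := by
    rw [Pi.add_apply, h1,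
      ← Finset.add_sum_erase Finset.univ
        (fun j => (∑ k, W k i * A k j) * (xstar j - y j)) (Finset.mem_univ i),
      hGd i]
    ring
  rw [h2]
  calc |∑ j ∈ Finset.univ.erase i, (∑ k, W k i * A k j) * (xstar j - y j)|
      ≤ ∑ j ∈ Finset.univ.erase i, |(∑ k, W k i * A k j) * (xstar j - y j)| :=
        Finset.abs_sum_le_sum_abs _ _
    _ ≤ ∑ j ∈ Finset.univ.erase i, gmc A * |y j - xstar j| := by
        refine Finset.sum_le_sum fun j hj => ?_
        rw [abs_mul, abs_sub_comm (xstar j) (y j)]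
        exact mul_le_mul_of_nonneg_right
          (hG i j (Finset.ne_of_mem_erase hj).symm) (abs_nonneg _)
    _ = gmc A * ∑ j ∈ Finset.univ.erase i, |y j - xstar j| := (Finset.mul_sum _ _ _).symm

/-- Bounds for one soft-thresholding half-step. -/
lemma branch_bound {M N : ℕ} (A W : Matrix (Fin M) (Fin N) ℝ) (hW : memWs A W)
    (hμ0 : 0 ≤ gmc A)
    (S : Finset (Fin N)) (xstar y : Fin N → ℝ)
    (hxS : ∀ i, i ∉ S → xstar i = 0)
    (θ : ℝ) (hθ : gmc A * (∑ j, |y j - xstar j|) ≤ θ) :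
    (∀ i ∉ S, soft θ (y + W.transpose.mulVec (A.mulVec xstar - A.mulVec y)) i = 0) ∧
    l1norm (soft θ (y + W.transpose.mulVec (A.mulVec xstar - A.mulVec y)) - xstar)
      ≤ gmc A * ((S.card : ℝ) * (∑ j, |y j - xstar j|) - ∑ i ∈ S, |y i - xstar i|)
        + (S.card : ℝ) * θ := by
  set z := y + W.transpose.mulVec (A.mulVec xstar - A.mulVec y) with hzdef
  have hstep : ∀ i, |z i - xstar i| ≤ gmc A * ∑ j ∈ Finset.univ.erase i, |y j - xstar j| :=
    step_coord A W hW.1 (fun i j hij => memWs_abs_le A W hW hij) xstar y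
  have hθ0 : 0 ≤ θ :=
    le_trans (mul_nonneg hμ0 (Finset.sum_nonneg fun j _ => abs_nonneg _)) hθ
  have herase : ∀ i : Fin N,
      gmc A * ∑ j ∈ Finset.univ.erase i, |y j - xstar j| ≤ θ := by
    intro i
    refine le_trans (mul_le_mul_of_nonneg_left ?_ hμ0) hθ
    exact Finset.sum_le_sum_of_subset_of_nonneg (Finset.erase_subset _ _)
      (fun j _ _ => abs_nonneg _)
  have hzero : ∀ i ∉ S, soft θ z i = 0 := by
    intro i hi
    apply soft_eq_zero
    have h := (hstep i).trans (herase i)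
    rw [hxS i hi, sub_zero] at h
    exact h
  refine ⟨hzero, ?_⟩
  have hcoord : ∀ i, |soft θ z i - xstar i|
      ≤ gmc A * ∑ j ∈ Finset.univ.erase i, |y j - xstar j| + θ := by
    intro i
    have h1 : |soft θ z i - xstar i| ≤ |soft θ z i - z i| + |z i - xstar i| :=
      abs_sub_le _ _ _
    have h2 := abs_soft_sub_le hθ0 z i
    have h3 := hstep i
    linarith
  have hsum : l1norm (soft θ z - xstar) = ∑ i ∈ S, |soft θ z i - xstar i| := by
    unfold l1norm
    rw [eq_comm]
    apply Finset.sum_subset (Finset.subset_univ S)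
    intro i _ hi
    simp [hzero i hi, hxS i hi]
  rw [hsum]
  calc ∑ i ∈ S, |soft θ z i - xstar i|
      ≤ ∑ i ∈ S, (gmc A * ∑ j ∈ Finset.univ.erase i, |y j - xstar j| + θ) :=
        Finset.sum_le_sum fun i _ => hcoord i
    _ = gmc A * ((S.card : ℝ) * (∑ j, |y j - xstar j|) - ∑ i ∈ S, |y i - xstar i|)
        + (S.card : ℝ) * θ := by
        rw [Finset.sum_add_distrib, Finset.sum_const, nsmul_eq_mul]
        have hc : ∀ i ∈ S, gmc A * ∑ j ∈ Finset.univ.erase i, |y j - xstar j|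
            = gmc A * (∑ j, |y j - xstar j|) - gmc A * |y i - xstar i| := by
          intro i _
          rw [Finset.sum_erase_eq_sub (Finset.mem_univ i), mul_sub]
        rw [Finset.sum_congr rfl hc, Finset.sum_sub_distrib, Finset.sum_const,
          nsmul_eq_mul, ← Finset.mul_sum]
        ring

set_option maxHeartbeats 1000000 in
/-- Theorem 4: upper bound of recovery error and linear convergence for HLISTA-CP. -/
theorem hlista_cp_recovery {M N : ℕ} (hM : 0 < M) (hN : 0 < N)
    (A : Matrix (Fin M) (Fin N) ℝ)
    (hcols : ∀ j, l2norm (fun i => A i j) = 1)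
    (hμ : 0 < gmc A)
    (S : Finset (Fin N)) (hS2 : 2 ≤ S.card) (hSN : 2 * S.card ≤ N)
    (hSμ : (S.card : ℝ) < (2 + 1 / gmc A) / 4)
    (Bx : ℝ) (hBx : 0 < Bx)
    (xstar : Fin N → ℝ) (hsupp : ∀ i, xstar i ≠ 0 ↔ i ∈ S) (hxb : ∀ i, |xstar i| ≤ Bx)
    (b : Fin M → ℝ) (hb : b = A.mulVec xstar)
    (x v u w : ℕ → Fin N → ℝ)
    (Wbar What : ℕ → Matrix (Fin M) (Fin N) ℝ)
    (θ₁ θ₂ α : ℕ → ℝ)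
    (hx0 : x 0 = 0)
    (hWbar : ∀ n, memWs A (Wbar n)) (hWhat : ∀ n, memWs A (What n))
    (hθ₁ : ∀ n, θ₁ n = gmc A * l1norm (x n - xstar))
    (hv : ∀ n, v n = soft (θ₁ n) (x n + (Wbar n).transpose.mulVec (b - A.mulVec (x n))))
    (hθ₂ : ∀ n, θ₂ n = gmc A * l1norm (u n - xstar)
      + gmc A * (((N : ℝ) - (S.card : ℝ)) / ((S.card : ℝ) - 1)) * l1norm (u n))
    (hw : ∀ n, w n = soft (θ₂ n) (u n + (What n).transpose.mulVec (b - A.mulVec (u n))))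
    (hα : ∀ n, (θ₁ n ≠ 0 → θ₂ n / (θ₁ n + θ₂ n) ≤ α n ∧ α n < 1) ∧ (θ₁ n = 0 → α n = 1))
    (hxs : ∀ n, x (n + 1) = α n • v n + (1 - α n) • w n)
    (c : ℝ) (hc : c = -Real.log (4 * gmc A * (S.card : ℝ) - 2 * gmc A)) :
    0 < c ∧ ∀ n : ℕ, (∀ i, x n i ≠ 0 → i ∈ S) ∧
      l2norm (x n - xstar) ≤ (S.card : ℝ) * Bx * Real.exp (-(c * (n : ℝ))) := by
  have hxS : ∀ i, i ∉ S → xstar i = 0 := by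
    intro i hi
    by_contra h
    exact hi ((hsupp i).1 h)
  have hμ0 : (0 : ℝ) ≤ gmc A := hμ.le
  have hs2 : (2 : ℝ) ≤ (S.card : ℝ) := by exact_mod_cast hS2
  have hNs : 2 * (S.card : ℝ) ≤ (N : ℝ) := by exact_mod_cast hSN
  set μ := gmc A with hμdef
  set s : ℝ := (S.card : ℝ) with hsdef
  set r : ℝ := 4 * μ * s - 2 * μ with hrdef
  have hr0 : 0 < r := by
    rw [hrdef]
    have := mul_pos hμ (show (0:ℝ) < 4 * s - 2 by linarith)
    nlinarith [this]
  have hr1 : r < 1 := by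
    have h1 : 4 * s < 2 + 1 / μ := by linarith
    have h2 : (1 / μ) * μ = 1 := by field_simp
    have h3 : 4 * s * μ < (2 + 1 / μ) * μ := mul_lt_mul_of_pos_right h1 hμ
    rw [hrdef]; nlinarith [h3, h2]
  have hcpos : 0 < c := by
    rw [hc]
    have hlog : Real.log (4 * μ * s - 2 * μ) < 0 := by
      rw [← hrdef] at *; exact Real.log_neg hr0 hr1
    linarith
  refine ⟨hcpos, ?_⟩
  have main : ∀ n : ℕ, (∀ i, x n i ≠ 0 → i ∈ S) ∧ l1norm (x n - xstar) ≤ s * Bx * r ^ n := by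
    intro n
    induction n with
    | zero =>
      constructor
      · intro i hi
        rw [hx0] at hi
        exact absurd rfl hi
      · have e0 : ∀ i : Fin N, |(x 0 - xstar) i| = |xstar i| := by
          intro i; rw [hx0]; simp
        have e1 : l1norm (x 0 - xstar) = ∑ i ∈ S, |xstar i| := by
          unfold l1norm
          rw [Finset.sum_congr rfl fun i _ => e0 i]
          refine (Finset.sum_subset (Finset.subset_univ S) ?_).symm
          intro i _ hi
          simp [hxS i hi]
        rw [e1, pow_zero, mul_one]
        calc ∑ i ∈ S, |xstar i| ≤ ∑ i ∈ S, Bx := Finset.sum_le_sum fun i _ => hxb i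
          _ = s * Bx := by rw [Finset.sum_const, nsmul_eq_mul]
    | succ n ih =>
      obtain ⟨hsup, hbd⟩ := ih
      have hxnS : ∀ i, i ∉ S → x n i = 0 := by
        intro i hi
        by_contra h
        exact hi (hsup i h)
      set T : ℝ := l1norm (x n - xstar) with hTdef
      have hTsum : (∑ j, |x n j - xstar j|) = T := by
        rw [hTdef]; unfold l1norm; exact Finset.sum_congr rfl fun j _ => rfl
      have hT0 : 0 ≤ T := by
        rw [← hTsum]; exact Finset.sum_nonneg fun j _ => abs_nonneg _
      have hθ₁n : θ₁ n = μ * T := hθ₁ n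
      -- v branch
      have hveq : v n = soft (θ₁ n)
          (x n + (Wbar n).transpose.mulVec (A.mulVec xstar - A.mulVec (x n))) := by
        rw [hv n, hb]
      have hbv := branch_bound A (Wbar n) (hWbar n) hμ0 S xstar (x n) hxS (θ₁ n)
        (by rw [hTsum, ← hθ₁n])
      have hv1 : ∀ i ∉ S, v n i = 0 := by
        intro i hi; rw [hveq]; exact hbv.1 i hi
      have hv2 : l1norm (v n - xstar)
          ≤ μ * (s * T - ∑ i ∈ S, |x n i - xstar i|) + s * θ₁ n := by
        rw [hveq]
        have := hbv.2
        rw [hTsum] at this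
        exact this
      have hTS : ∑ i ∈ S, |x n i - xstar i| = T := by
        rw [← hTsum]
        refine Finset.sum_subset (Finset.subset_univ S) ?_
        intro i _ hi
        simp [hxnS i hi, hxS i hi]
      have hvfinal : l1norm (v n - xstar) ≤ (2 * s - 1) * θ₁ n := by
        rw [hTS] at hv2
        rw [hθ₁n] at hv2 ⊢
        linarith [hv2]
      -- w branch
      set D : ℝ := l1norm (u n - xstar) with hDdef
      set U : ℝ := l1norm (u n) with hUdef
      have hDsum : (∑ j, |u n j - xstar j|) = D := by
        rw [hDdef]; unfold l1norm; exact Finset.sum_congr rfl fun j _ => rfl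
      have hUsum : (∑ j, |u n j|) = U := by
        rw [hUdef]; unfold l1norm; exact Finset.sum_congr rfl fun j _ => rfl
      have hD0 : 0 ≤ D := by rw [← hDsum]; exact Finset.sum_nonneg fun j _ => abs_nonneg _
      have hU0 : 0 ≤ U := by rw [← hUsum]; exact Finset.sum_nonneg fun j _ => abs_nonneg _
      have hθ₂n : θ₂ n = μ * D + μ * (((N : ℝ) - s) / (s - 1)) * U := hθ₂ n
      have hθ₂ge : μ * (∑ j, |u n j - xstar j|) ≤ θ₂ n := by
        rw [hDsum, hθ₂n]
        have hK : 0 ≤ μ * (((N : ℝ) - s) / (s - 1)) * U :=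
          mul_nonneg (mul_nonneg hμ0 (div_nonneg (by linarith) (by linarith))) hU0
        linarith
      have hweq : w n = soft (θ₂ n)
          (u n + (What n).transpose.mulVec (A.mulVec xstar - A.mulVec (u n))) := by
        rw [hw n, hb]
      have hbw := branch_bound A (What n) (hWhat n) hμ0 S xstar (u n) hxS (θ₂ n) hθ₂ge
      have hw1 : ∀ i ∉ S, w n i = 0 := by
        intro i hi; rw [hweq]; exact hbw.1 i hi
      have hw2 : l1norm (w n - xstar)
          ≤ μ * (s * D - ∑ i ∈ S, |u n i - xstar i|) + s * θ₂ n := by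
        rw [hweq]
        have := hbw.2
        rw [hDsum] at this
        exact this
      have hQ : D - (∑ i ∈ S, |u n i - xstar i|) ≤ U := by
        have hsplit : (∑ i ∈ Finset.univ \ S, |u n i - xstar i|)
            + (∑ i ∈ S, |u n i - xstar i|) = ∑ i, |u n i - xstar i| :=
          Finset.sum_sdiff (Finset.subset_univ S)
        have heq : (∑ i ∈ Finset.univ \ S, |u n i - xstar i|)
            = ∑ i ∈ Finset.univ \ S, |u n i| := by
          refine Finset.sum_congr rfl fun i hi => ?_
          rw [hxS i (Finset.mem_sdiff.1 hi).2, sub_zero]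
        have hle : (∑ i ∈ Finset.univ \ S, |u n i|) ≤ ∑ i, |u n i| :=
          Finset.sum_le_sum_of_subset_of_nonneg (Finset.sdiff_subset)
            (fun i _ _ => abs_nonneg _)
        rw [hDsum] at hsplit
        rw [hUsum] at hle
        linarith [heq ▸ hsplit]
      have hθ₂0 : 0 ≤ θ₂ n :=
        le_trans (mul_nonneg hμ0 (Finset.sum_nonneg fun j _ => abs_nonneg _)) hθ₂ge
      have hwfinal : l1norm (w n - xstar) ≤ (2 * s - 1) * θ₂ n := by
        have hs1 : s - 1 ≠ 0 := by linarith
        have hfld : ((N : ℝ) - s) / (s - 1) * (s - 1) = (N : ℝ) - s :=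
          div_mul_cancel₀ _ hs1
        have h3 : (s - 1) * θ₂ n = (s - 1) * (μ * D) + μ * ((N : ℝ) - s) * U := by
          rw [hθ₂n]
          linear_combination μ * U * hfld
        have h1 : μ * (s * D - (∑ i ∈ S, |u n i - xstar i|))
            ≤ μ * ((s - 1) * D + U) :=
          mul_le_mul_of_nonneg_left (by linarith) hμ0
        have hNs1 : (0:ℝ) ≤ (N : ℝ) - s - 1 := by linarith
        have h2 : μ * U ≤ μ * ((N : ℝ) - s) * U := by
          linarith [mul_nonneg hNs1 (mul_nonneg hμ0 hU0)]
        linarith [hw2, h1, h2, h3]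
      -- θ nonnegativity
      have hθ₁0 : 0 ≤ θ₁ n := by rw [hθ₁n]; exact mul_nonneg hμ0 hT0
      -- combine
      rcases eq_or_ne (θ₁ n) 0 with hz | hz
      · have hα1 : α n = 1 := (hα n).2 hz
        have hx1 : x (n + 1) = v n := by
          rw [hxs n, hα1]; simp
        constructor
        · intro i hi
          by_contra hiS
          rw [hx1] at hi
          exact hi (hv1 i hiS)
        · rw [hx1]
          refine le_trans hvfinal ?_
          rw [hz, mul_zero]
          exact mul_nonneg (mul_nonneg (by linarith) hBx.le) (pow_nonneg hr0.le _)
      · obtain ⟨hαlo, hαlt⟩ := (hα n).1 hz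
        have hθ₁pos : 0 < θ₁ n := lt_of_le_of_ne hθ₁0 (Ne.symm hz)
        have hα0 : 0 ≤ α n :=
          le_trans (div_nonneg hθ₂0 (by linarith)) hαlo
        have h1α : 0 ≤ 1 - α n := by linarith
        constructor
        · intro i hi
          by_contra hiS
          apply hi
          rw [hxs n]
          simp [hv1 i hiS, hw1 i hiS]
        · have hcomb : l1norm (x (n + 1) - xstar)
              ≤ α n * l1norm (v n - xstar) + (1 - α n) * l1norm (w n - xstar) := by
            unfold l1norm
            rw [Finset.mul_sum, Finset.mul_sum, ← Finset.sum_add_distrib]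
            refine Finset.sum_le_sum fun i _ => ?_
            rw [hxs n]
            simp only [Pi.sub_apply, Pi.add_apply, Pi.smul_apply, smul_eq_mul]
            calc |α n * v n i + (1 - α n) * w n i - xstar i|
                = |α n * (v n i - xstar i) + (1 - α n) * (w n i - xstar i)| := by
                  ring_nf
              _ ≤ |α n * (v n i - xstar i)| + |(1 - α n) * (w n i - xstar i)| :=
                  abs_add_le _ _
              _ = α n * |v n i - xstar i| + (1 - α n) * |w n i - xstar i| := by
                  rw [abs_mul, abs_mul, abs_of_nonneg hα0, abs_of_nonneg h1α]
          have hαθ : (1 - α n) * θ₂ n ≤ θ₁ n := by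
            have hsumpos : 0 < θ₁ n + θ₂ n := by linarith
            have hdiv := (div_le_iff₀ hsumpos).1 hαlo
            linarith [hdiv, mul_le_mul_of_nonneg_right hαlt.le hθ₁pos.le]
          have e1 : α n * ((2 * s - 1) * θ₁ n) ≤ (2 * s - 1) * θ₁ n := by
            linarith [mul_nonneg h1α (mul_nonneg (show (0:ℝ) ≤ 2 * s - 1 by linarith) hθ₁pos.le)]
          have e2 : (1 - α n) * ((2 * s - 1) * θ₂ n) ≤ (2 * s - 1) * θ₁ n := by
            linarith [mul_le_mul_of_nonneg_left hαθ (show (0:ℝ) ≤ 2 * s - 1 by linarith)]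
          have hrT : (2 * s - 1) * θ₁ n + (2 * s - 1) * θ₁ n = r * T := by
            rw [hθ₁n, hrdef]; ring
          calc l1norm (x (n + 1) - xstar)
              ≤ α n * l1norm (v n - xstar) + (1 - α n) * l1norm (w n - xstar) := hcomb
            _ ≤ α n * ((2 * s - 1) * θ₁ n) + (1 - α n) * ((2 * s - 1) * θ₂ n) :=
                add_le_add (mul_le_mul_of_nonneg_left hvfinal hα0)
                  (mul_le_mul_of_nonneg_left hwfinal h1α)
            _ ≤ r * T := by linarith [e1, e2, hrT]
            _ ≤ r * (s * Bx * r ^ n) := mul_le_mul_of_nonneg_left hbd hr0.le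
            _ = s * Bx * r ^ (n + 1) := by ring
  intro n
  refine ⟨(main n).1, ?_⟩
  have hexp : Real.exp (-(c * (n : ℝ))) = r ^ n := by
    have harg : -(c * (n : ℝ)) = (n : ℝ) * Real.log r := by
      rw [hc, hrdef]; ring
    rw [harg, Real.exp_nat_mul, Real.exp_log hr0]
  rw [hexp]
  exact le_trans (l2_le_l1 _) (main n).2
end

section
/- One-step bound for thresholding with support selection (Eq. (new10) and the 'no false positive' step in the proof of Theorem 5). Let S ⊆ {1, …, N}, x* ∈ ℝ^N with supp(x*) ⊆ S, b = A x*, and x ∈ ℝ^N with supp(x) ⊆ S. Let W ∈ W_s(A), μ = μ(A), θ ≥ μ‖x − x*‖₁, let I ⊆ {1, …, N} be any index set, and set v = S^I_{ss,θ}(x + Wᵀ(b − Ax)). Then vᵢ = 0 for every i ∉ S, and, writing Ψ = {i ∈ S : vᵢ ≠ 0 and i ∈ I}, one has ‖v − x*‖₁ ≤ μ(|S| − 1)·‖x − x*‖₁ + (|S| − |Ψ|)·θ. -/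
open scoped Classical

/-- Thresholding with support selection `S^I_{ss,θ}`: entries with `|zᵢ| > θ` and `i ∈ I`
pass through unchanged, entries with `|zᵢ| > θ` and `i ∉ I` are soft-thresholded, and
entries with `|zᵢ| ≤ θ` are set to zero. -/
noncomputable def softSS {n : ℕ} (θ : ℝ) (I : Finset (Fin n)) (z : Fin n → ℝ) :
    Fin n → ℝ :=
  fun i => if θ < |z i| then (if i ∈ I then z i else Real.sign (z i) * (|z i| - θ)) else 0

/-- One-step bound for thresholding with support selection (Eq. (new10) and the
'no false positive' step in the proof of Theorem 5). -/
theorem hlista_cpss_step {M N : ℕ} (hM : 0 < M) (hN : 0 < N)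
    (A : Matrix (Fin M) (Fin N) ℝ)
    (hcols : ∀ j, l2norm (fun i => A i j) = 1)
    (S : Finset (Fin N)) (xstar : Fin N → ℝ) (hsupp : ∀ i, xstar i ≠ 0 → i ∈ S)
    (b : Fin M → ℝ) (hb : b = A.mulVec xstar)
    (x : Fin N → ℝ) (hx : ∀ i, x i ≠ 0 → i ∈ S)
    (W : Matrix (Fin M) (Fin N) ℝ) (hW : memWs A W)
    (θ : ℝ) (hθ : gmc A * l1norm (x - xstar) ≤ θ)
    (I : Finset (Fin N))
    (v : Fin N → ℝ)
    (hv : v = softSS θ I (x + W.transpose.mulVec (b - A.mulVec x))) :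
    (∀ i, i ∉ S → v i = 0) ∧
    l1norm (v - xstar) ≤ gmc A * ((S.card : ℝ) - 1) * l1norm (x - xstar)
      + ((S.card : ℝ) - ((S.filter (fun i => v i ≠ 0 ∧ i ∈ I)).card : ℝ)) * θ := by
  classical
  obtain ⟨hWdiag, hWmu⟩ := hW
  set μ := gmc A with hμdef
  -- μ ≥ 0
  have hμ0 : 0 ≤ μ := by
    apply Real.sInf_nonneg
    rintro c ⟨W', -, rfl⟩
    apply Real.sSup_nonneg
    rintro c ⟨i, j, -, rfl⟩
    exact abs_nonneg _
  set d : Fin N → ℝ := fun i => x i - xstar i with hd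
  have hTdef : l1norm (x - xstar) = ∑ i, |d i| := rfl
  set T := l1norm (x - xstar) with hTset
  have hT0 : 0 ≤ T := by
    rw [hTdef]; exact Finset.sum_nonneg fun i _ => abs_nonneg _
  have hθ0 : 0 ≤ θ := le_trans (mul_nonneg hμ0 hT0) hθ
  set G : Fin N → Fin N → ℝ := fun i j => ∑ k, W k i * A k j with hG
  have hGle : ∀ i j, i ≠ j → |G i j| ≤ μ := by
    intro i j hij
    rw [← hWmu]
    apply le_csSup
    · apply Set.Finite.bddAbove
      have hsub : {c : ℝ | ∃ i j : Fin N, i ≠ j ∧ c = |∑ k, W k i * A k j|} ⊆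
          (fun p : Fin N × Fin N => |∑ k, W k p.1 * A k p.2|) '' Set.univ := by
        rintro c ⟨i, j, -, rfl⟩; exact ⟨(i, j), trivial, rfl⟩
      exact (Set.finite_univ.image _).subset hsub
    · exact ⟨i, j, hij, rfl⟩
  set z : Fin N → ℝ := x + W.transpose.mulVec (b - A.mulVec x) with hz
  set e : Fin N → ℝ := fun i => ∑ j ∈ Finset.univ.erase i, G i j * (xstar j - x j) with he
  have hze : ∀ i, z i = xstar i + e i := by
    intro i
    have h1 : (W.transpose.mulVec (b - A.mulVec x)) i = ∑ j, G i j * (xstar j - x j) := by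
      simp only [Matrix.mulVec, dotProduct, Matrix.transpose_apply, Pi.sub_apply, hb]
      calc ∑ k, W k i * ((∑ j, A k j * xstar j) - ∑ j, A k j * x j)
          = ∑ k, ∑ j, W k i * A k j * (xstar j - x j) := by
            apply Finset.sum_congr rfl; intro k _
            rw [← Finset.sum_sub_distrib, Finset.mul_sum]
            apply Finset.sum_congr rfl; intro j _; ring
        _ = ∑ j, ∑ k, W k i * A k j * (xstar j - x j) := Finset.sum_comm
        _ = ∑ j, G i j * (xstar j - x j) := by
            apply Finset.sum_congr rfl; intro j _; rw [hG, Finset.sum_mul]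
    have h2 : ∑ j, G i j * (xstar j - x j)
        = G i i * (xstar i - x i) + ∑ j ∈ Finset.univ.erase i, G i j * (xstar j - x j) :=
      (Finset.add_sum_erase _ _ (Finset.mem_univ i)).symm
    have hGii : G i i = 1 := hWdiag i
    simp only [hz, Pi.add_apply, h1, h2, hGii, he]
    ring
  have hebound : ∀ i, |e i| ≤ μ * (T - |d i|) := by
    intro i
    have h1 : |e i| ≤ ∑ j ∈ Finset.univ.erase i, μ * |d j| := by
      refine (Finset.abs_sum_le_sum_abs _ _).trans (Finset.sum_le_sum ?_)
      intro j hj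
      rw [abs_mul]
      have hji : j ≠ i := Finset.ne_of_mem_erase hj
      have h2 : |xstar j - x j| = |d j| := by rw [hd, abs_sub_comm]
      rw [h2]
      exact mul_le_mul_of_nonneg_right (hGle i j hji.symm) (abs_nonneg _)
    have h3 : ∑ j ∈ Finset.univ.erase i, μ * |d j| = μ * (T - |d i|) := by
      rw [← Finset.mul_sum, Finset.sum_erase_eq_sub (Finset.mem_univ i), ← hTdef]
    rw [h3] at h1; exact h1
  have hxs0 : ∀ i, i ∉ S → xstar i = 0 := by
    intro i hi; by_contra h; exact hi (hsupp i h)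
  have hx0 : ∀ i, i ∉ S → x i = 0 := by
    intro i hi; by_contra h; exact hi (hx i h)
  -- first claim
  have hclaim1 : ∀ i, i ∉ S → v i = 0 := by
    intro i hi
    have hzi : |z i| ≤ θ := by
      have hdi : d i = 0 := by rw [hd]; simp [hxs0 i hi, hx0 i hi]
      have : z i = e i := by rw [hze i, hxs0 i hi, zero_add]
      rw [this]
      calc |e i| ≤ μ * (T - |d i|) := hebound i
        _ = μ * T := by rw [hdi]; simp
        _ ≤ θ := hθ
    simp [hv, softSS, not_lt.mpr hzi]
  refine ⟨hclaim1, ?_⟩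
  -- per-index bound on S
  have key : ∀ i ∈ S, |v i - xstar i| ≤ μ * (T - |d i|) +
      (if v i ≠ 0 ∧ i ∈ I then 0 else θ) := by
    intro i _
    have hvz : v i = if θ < |z i| then (if i ∈ I then z i
        else Real.sign (z i) * (|z i| - θ)) else 0 := by rw [hv]; rfl
    have hei : z i - xstar i = e i := by rw [hze i]; ring
    by_cases h1 : θ < |z i|
    · have hzne : z i ≠ 0 := by
        intro h0; rw [h0, abs_zero] at h1; exact absurd h1 (not_lt.mpr hθ0)
      have hsign : |Real.sign (z i)| = 1 := by
        rcases lt_trichotomy (z i) 0 with h | h | h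
        · rw [Real.sign_of_neg h]; norm_num
        · exact absurd h hzne
        · rw [Real.sign_of_pos h]; norm_num
      by_cases h2 : i ∈ I
      · have hvi : v i = z i := by rw [hvz, if_pos h1, if_pos h2]
        have hvne : v i ≠ 0 := by rw [hvi]; exact hzne
        rw [if_pos ⟨hvne, h2⟩, add_zero, hvi, hei]
        exact hebound i
      · have hvi : v i = Real.sign (z i) * (|z i| - θ) := by rw [hvz, if_pos h1, if_neg h2]
        have hcond : ¬(v i ≠ 0 ∧ i ∈ I) := fun h => h2 h.2
        rw [if_neg hcond]
        have hvz2 : |v i - z i| = θ := by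
          have habs : v i - z i = θ ∨ v i - z i = -θ := by
            rcases lt_trichotomy (z i) 0 with h | h | h
            · left; rw [hvi, Real.sign_of_neg h, abs_of_neg h]; ring
            · exact absurd h hzne
            · right; rw [hvi, Real.sign_of_pos h, abs_of_pos h]; ring
          rcases habs with h | h
          · rw [h]; exact abs_of_nonneg hθ0
          · rw [h, abs_neg]; exact abs_of_nonneg hθ0
        calc |v i - xstar i| ≤ |v i - z i| + |z i - xstar i| := abs_sub_le _ _ _
          _ = θ + |e i| := by rw [hvz2, hei]
          _ ≤ μ * (T - |d i|) + θ := by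
              have := hebound i; linarith
    · have hvi : v i = 0 := by rw [hvz, if_neg h1]
      have hcond : ¬(v i ≠ 0 ∧ i ∈ I) := fun h => h.1 hvi
      rw [if_neg hcond, hvi]
      have : |xstar i| ≤ θ + |e i| := by
        have h4 : xstar i = z i - e i := by rw [hze i]; ring
        rw [h4]
        calc |z i - e i| ≤ |z i| + |e i| := abs_sub _ _
          _ ≤ θ + |e i| := by have := not_lt.mp h1; linarith
      have h5 := hebound i
      rw [zero_sub, abs_neg]
      linarith
  -- assemble
  have hsum1 : l1norm (v - xstar) = ∑ i ∈ S, |v i - xstar i| := by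
    rw [show l1norm (v - xstar) = ∑ i, |v i - xstar i| from rfl]
    rw [Finset.sum_subset S.subset_univ]
    intro i _ hi
    rw [hclaim1 i hi, hxs0 i hi]
    simp
  have hsum2 : ∑ i ∈ S, |d i| = T := by
    rw [hTdef]
    apply Finset.sum_subset S.subset_univ
    intro i _ hi
    rw [hd]
    simp [hxs0 i hi, hx0 i hi]
  have hP : ∑ i ∈ S, (if v i ≠ 0 ∧ i ∈ I then (0 : ℝ) else θ)
      = ((S.card : ℝ) - ((S.filter (fun i => v i ≠ 0 ∧ i ∈ I)).card : ℝ)) * θ := by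
    rw [Finset.sum_ite, Finset.sum_const, Finset.sum_const, smul_zero, zero_add, nsmul_eq_mul]
    have hcards : (S.filter (fun i => ¬(v i ≠ 0 ∧ i ∈ I))).card
        = S.card - (S.filter (fun i => v i ≠ 0 ∧ i ∈ I)).card := by
      have := Finset.card_filter_add_card_filter_not
        (s := S) (p := fun i => v i ≠ 0 ∧ i ∈ I)
      omega
    rw [hcards, Nat.cast_sub (Finset.card_filter_le _ _)]
  calc l1norm (v - xstar) = ∑ i ∈ S, |v i - xstar i| := hsum1
    _ ≤ ∑ i ∈ S, (μ * (T - |d i|) + (if v i ≠ 0 ∧ i ∈ I then 0 else θ)) :=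
        Finset.sum_le_sum key
    _ = μ * ((S.card : ℝ) * T - ∑ i ∈ S, |d i|)
        + ∑ i ∈ S, (if v i ≠ 0 ∧ i ∈ I then (0 : ℝ) else θ) := by
        rw [Finset.sum_add_distrib, ← Finset.mul_sum, Finset.sum_sub_distrib,
          Finset.sum_const, nsmul_eq_mul]
    _ = μ * ((S.card : ℝ) - 1) * T
        + ((S.card : ℝ) - ((S.filter (fun i => v i ≠ 0 ∧ i ∈ I)).card : ℝ)) * θ := by
        rw [hsum2, hP]; ring
end

section
/- One-step 'no false positive' and ℓ¹ bound for the HALISTA gradient step (Eqs. (t6)–(t7) and (t11) in the proof of Theorem 6). Let S ⊆ {1, …, N}, x* ∈ ℝ^N with supp(x*) ⊆ S, b = A x*, and x ∈ ℝ^N with supp(x) ⊆ S. Let W ∈ W_s(A), μ = μ(A), γ₁ > 0, θ₁ = γ₁·μ·‖x − x*‖₁, and v = S_{θ₁}(x + γ₁·Wᵀ(b − Ax)). Then vᵢ = 0 for every i ∉ S, and ‖v − x*‖₁ ≤ (μγ₁(2|S| − 1) + |1 − γ₁|)·‖x − x*‖₁. -/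
open scoped Classical

lemma soft_dist (θ t : ℝ) (hθ : 0 ≤ θ) :
    |Real.sign t * max (|t| - θ) 0 - t| ≤ θ := by
  rcases le_or_gt (|t|) θ with h | h
  · rw [max_eq_right (by linarith), mul_zero, zero_sub, abs_neg]; exact h
  · have ht : t ≠ 0 := fun h0 => by simp [h0] at h; linarith
    rw [max_eq_left (by linarith)]
    rcases ht.lt_or_gt with h1 | h1
    · rw [Real.sign_of_neg h1, abs_of_neg h1]
      have : -1 * (-t - θ) - t = θ := by ring
      rw [this, abs_of_nonneg hθ]
    · rw [Real.sign_of_pos h1, abs_of_pos h1]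
      have : 1 * (t - θ) - t = -θ := by ring
      rw [this, abs_neg, abs_of_nonneg hθ]

/-- One-step 'no false positive' and ℓ¹ bound for the HALISTA gradient step
(Eqs. (t6)–(t7) and (t11) in the proof of Theorem 6). -/
theorem halista_gradstep {M N : ℕ} (hM : 0 < M) (hN : 0 < N)
    (A : Matrix (Fin M) (Fin N) ℝ)
    (hcols : ∀ j, l2norm (fun i => A i j) = 1)
    (S : Finset (Fin N)) (xstar : Fin N → ℝ) (hsupp : ∀ i, xstar i ≠ 0 → i ∈ S)
    (b : Fin M → ℝ) (hb : b = A.mulVec xstar)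
    (x : Fin N → ℝ) (hx : ∀ i, x i ≠ 0 → i ∈ S)
    (W : Matrix (Fin M) (Fin N) ℝ) (hW : memWs A W)
    (γ₁ : ℝ) (hγ₁ : 0 < γ₁)
    (θ₁ : ℝ) (hθ₁ : θ₁ = γ₁ * gmc A * l1norm (x - xstar))
    (v : Fin N → ℝ)
    (hv : v = soft θ₁ (x + γ₁ • W.transpose.mulVec (b - A.mulVec x))) :
    (∀ i, i ∉ S → v i = 0) ∧
    l1norm (v - xstar) ≤
      (gmc A * γ₁ * (2 * (S.card : ℝ) - 1) + |1 - γ₁|) * l1norm (x - xstar) := by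
  obtain ⟨hWdiag, hWmu⟩ := hW
  set μ := gmc A with hμdef
  -- μ is nonnegative
  have hμ0 : 0 ≤ μ := by
    rw [← hWmu]
    apply Real.sSup_nonneg
    rintro c ⟨i, j, hij, rfl⟩; positivity
  -- off-diagonal bound
  have hoff : ∀ i j : Fin N, i ≠ j → |∑ k, W k i * A k j| ≤ μ := by
    intro i j hij
    rw [← hWmu]
    apply le_csSup
    · apply Set.Finite.bddAbove
      apply Set.Finite.subset
        (Set.finite_range (fun p : Fin N × Fin N => |∑ k, W k p.1 * A k p.2|))
      rintro c ⟨i, j, _, rfl⟩; exact ⟨(i, j), rfl⟩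
    · exact ⟨i, j, hij, rfl⟩
  set e : Fin N → ℝ := fun i => x i - xstar i with he
  set L : ℝ := l1norm (x - xstar) with hLdef
  have hL : L = ∑ j, |e j| := by
    simp [hLdef, l1norm, he]
  have hL0 : 0 ≤ L := by
    rw [hL]; exact Finset.sum_nonneg fun j _ => abs_nonneg _
  have heS : ∀ i, i ∉ S → e i = 0 := by
    intro i hi
    have h1 : x i = 0 := by by_contra h; exact hi (hx i h)
    have h2 : xstar i = 0 := by by_contra h; exact hi (hsupp i h)
    simp [he, h1, h2]
  have hsumS : ∑ i ∈ S, |e i| = L := by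
    rw [hL]
    apply Finset.sum_subset (Finset.subset_univ S)
    intro i _ hi
    rw [heS i hi, abs_zero]
  -- the argument of soft
  set z : Fin N → ℝ := x + γ₁ • W.transpose.mulVec (b - A.mulVec x) with hzdef
  set c : Fin N → Fin N → ℝ := fun i j => ∑ k, W k i * A k j with hc
  set R : Fin N → ℝ := fun i => ∑ j ∈ Finset.univ.erase i, c i j * e j with hR
  have hz : ∀ i, z i = x i - γ₁ * e i - γ₁ * R i := by
    intro i
    have hu : (W.transpose.mulVec (b - A.mulVec x)) i = -(e i + R i) := by
      have h1 : ∀ k, (b - A.mulVec x) k = ∑ j, A k j * (-(e j)) := by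
        intro k
        simp only [Pi.sub_apply, hb, Matrix.mulVec, dotProduct, he]
        rw [← Finset.sum_sub_distrib]
        congr 1; ext j; ring
      have h2 : (W.transpose.mulVec (b - A.mulVec x)) i
          = ∑ j, c i j * (-(e j)) := by
        simp only [Matrix.mulVec, dotProduct, Matrix.transpose_apply]
        simp_rw [h1, Finset.mul_sum]
        rw [Finset.sum_comm]
        apply Finset.sum_congr rfl
        intro j _
        rw [hc, Finset.sum_mul]
        apply Finset.sum_congr rfl
        intro k _; ring
      rw [h2, ← Finset.add_sum_erase _ _ (Finset.mem_univ i)]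
      have hcii : c i i = 1 := hWdiag i
      rw [hcii]
      have h3 : ∑ j ∈ Finset.univ.erase i, c i j * -e j
          = -∑ j ∈ Finset.univ.erase i, c i j * e j := by
        rw [← Finset.sum_neg_distrib]
        apply Finset.sum_congr rfl
        intro j _; ring
      rw [h3, hR]
      ring
    simp only [hzdef, Pi.add_apply, Pi.smul_apply, smul_eq_mul, hu]
    ring
  have hRbound : ∀ i, |R i| ≤ μ * (L - |e i|) := by
    intro i
    have h1 : |R i| ≤ ∑ j ∈ Finset.univ.erase i, μ * |e j| := by
      refine le_trans (Finset.abs_sum_le_sum_abs _ _) ?_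
      apply Finset.sum_le_sum
      intro j hj
      rw [abs_mul]
      exact mul_le_mul_of_nonneg_right (hoff i j (Finset.ne_of_mem_erase hj).symm)
        (abs_nonneg _)
    have h2 : ∑ j ∈ Finset.univ.erase i, |e j| = L - |e i| := by
      rw [hL]
      rw [← Finset.add_sum_erase _ _ (Finset.mem_univ i)]
      ring
    calc |R i| ≤ ∑ j ∈ Finset.univ.erase i, μ * |e j| := h1
      _ = μ * ∑ j ∈ Finset.univ.erase i, |e j| := by rw [Finset.mul_sum]
      _ = μ * (L - |e i|) := by rw [h2]
  have hθ₁' : θ₁ = γ₁ * μ * L := hθ₁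
  have hθ₁0 : 0 ≤ θ₁ := by rw [hθ₁']; positivity
  have hvz : ∀ i, v i = Real.sign (z i) * max (|z i| - θ₁) 0 := by
    intro i; rw [hv]; rfl
  -- part 1
  have part1 : ∀ i, i ∉ S → v i = 0 := by
    intro i hi
    have hei : e i = 0 := heS i hi
    have hxi : x i = 0 := by by_contra h; exact hi (hx i h)
    have hzi : z i = -(γ₁ * R i) := by rw [hz i, hei, hxi]; ring
    have habs : |z i| ≤ θ₁ := by
      rw [hzi, abs_neg, abs_mul, abs_of_pos hγ₁, hθ₁']
      have := hRbound i
      rw [hei, abs_zero, sub_zero] at this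
      nlinarith [abs_nonneg (R i)]
    rw [hvz i, max_eq_right (by linarith), mul_zero]
  refine ⟨part1, ?_⟩
  -- part 2
  have hterm : ∀ i ∈ S, |v i - xstar i|
      ≤ |1 - γ₁| * |e i| + γ₁ * (μ * (L - |e i|)) + θ₁ := by
    intro i _
    have h1 : |v i - z i| ≤ θ₁ := by rw [hvz i]; exact soft_dist θ₁ (z i) hθ₁0
    have h2 : |z i - xstar i| ≤ |1 - γ₁| * |e i| + γ₁ * (μ * (L - |e i|)) := by
      have hzi : z i - xstar i = (1 - γ₁) * e i - γ₁ * R i := by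
        rw [hz i, he]; simp only; ring
      rw [hzi]
      refine le_trans (abs_sub _ _) ?_
      rw [abs_mul, abs_mul, abs_of_pos hγ₁]
      exact add_le_add le_rfl (mul_le_mul_of_nonneg_left (hRbound i) hγ₁.le)
    calc |v i - xstar i| ≤ |v i - z i| + |z i - xstar i| := by
          have := abs_sub_le (v i) (z i) (xstar i); linarith
      _ ≤ θ₁ + (|1 - γ₁| * |e i| + γ₁ * (μ * (L - |e i|))) := add_le_add h1 h2
      _ = |1 - γ₁| * |e i| + γ₁ * (μ * (L - |e i|)) + θ₁ := by ring
  have hmain : l1norm (v - xstar) = ∑ i ∈ S, |v i - xstar i| := by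
    simp only [l1norm, Pi.sub_apply]
    symm
    apply Finset.sum_subset (Finset.subset_univ S)
    intro i _ hi
    have h2 : xstar i = 0 := by by_contra h; exact hi (hsupp i h)
    rw [part1 i hi, h2, sub_zero, abs_zero]
  rw [hmain]
  calc ∑ i ∈ S, |v i - xstar i|
      ≤ ∑ i ∈ S, (|1 - γ₁| * |e i| + γ₁ * (μ * (L - |e i|)) + θ₁) :=
        Finset.sum_le_sum hterm
    _ = (|1 - γ₁| - γ₁ * μ) * (∑ i ∈ S, |e i|)
        + (S.card : ℝ) * (γ₁ * μ * L + θ₁) := by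
        rw [Finset.sum_congr rfl (fun i _ => show
          |1 - γ₁| * |e i| + γ₁ * (μ * (L - |e i|)) + θ₁
          = (|1 - γ₁| - γ₁ * μ) * |e i| + (γ₁ * μ * L + θ₁) by ring)]
        rw [Finset.sum_add_distrib, ← Finset.mul_sum, Finset.sum_const,
          nsmul_eq_mul]
    _ = (μ * γ₁ * (2 * (S.card : ℝ) - 1) + |1 - γ₁|) * L := by
        rw [hsumS, hθ₁']; ring
end

section
/- One-iteration ℓ¹ contraction of HALISTA (Eq. (t16) in the proof of Theorem 6, with γ₂ = 1). Let S ⊆ {1, …, N} with |S| ≥ 2 and 2|S| ≤ N, μ = μ(A), x* ∈ ℝ^N with supp(x*) ⊆ S, b = A x*, and W ∈ W_s(A). Let x ∈ ℝ^N with supp(x) ⊆ S, u ∈ ℝ^N arbitrary, γ₁ > 0, θ₁ = γ₁μ‖x − x*‖₁, θ₂ = μ·(‖u − x*‖₁ + ((N − |S|)/(|S| − 1))·‖u‖₁), v = S_{θ₁}(x + γ₁Wᵀ(b − Ax)), w = S_{θ₂}(u + Wᵀ(b − Au)), and let α satisfy θ₂/(θ₁ + θ₂) ≤ α < 1 if θ₁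 ≠ 0 and α = 1 if θ₁ = 0. Then x⁺ = αv + (1 − α)w satisfies supp(x⁺) ⊆ S and ‖x⁺ − x*‖₁ ≤ (2μγ₁(2|S| − 1) + |1 − γ₁|)·‖x − x*‖₁. -/
open scoped Classical

lemma soft_eq_zero' {θ z : ℝ} (h : |z| ≤ θ) : Real.sign z * max (|z| - θ) 0 = 0 := by
  rw [max_eq_right (by linarith), mul_zero]

lemma sign_mul_abs' (z : ℝ) : Real.sign z * |z| = z := by
  rcases lt_trichotomy z 0 with h|h|h
  · rw [Real.sign_of_neg h, abs_of_neg h]; ring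
  · simp [h]
  · rw [Real.sign_of_pos h, abs_of_pos h]; ring

lemma soft_sub_le' {θ z : ℝ} (hθ : 0 ≤ θ) : |Real.sign z * max (|z| - θ) 0 - z| ≤ θ := by
  rcases le_or_gt (|z|) θ with h | h
  · rw [soft_eq_zero' h, zero_sub, abs_neg]; exact h
  · rw [max_eq_left (by linarith), mul_sub, sign_mul_abs']
    have h1 : z - Real.sign z * θ - z = -(Real.sign z * θ) := by ring
    rw [h1, abs_neg, abs_mul]
    have hs : |Real.sign z| ≤ 1 := by
      rcases Real.sign_apply_eq z with h0|h0|h0 <;> rw [h0] <;> norm_num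
    calc |Real.sign z| * |θ| ≤ 1 * |θ| := mul_le_mul_of_nonneg_right hs (abs_nonneg _)
      _ = θ := by rw [one_mul, abs_of_nonneg hθ]

set_option maxHeartbeats 1000000 in
/-- One-iteration ℓ¹ contraction of HALISTA (Eq. (t16) in the proof of Theorem 6,
with γ₂ = 1). -/
theorem halista_contraction {M N : ℕ} (hM : 0 < M) (hN : 0 < N)
    (A : Matrix (Fin M) (Fin N) ℝ)
    (hcols : ∀ j, l2norm (fun i => A i j) = 1)
    (S : Finset (Fin N)) (hS2 : 2 ≤ S.card) (hSN : 2 * S.card ≤ N)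
    (xstar : Fin N → ℝ) (hsupp : ∀ i, xstar i ≠ 0 → i ∈ S)
    (b : Fin M → ℝ) (hb : b = A.mulVec xstar)
    (W : Matrix (Fin M) (Fin N) ℝ) (hW : memWs A W)
    (x : Fin N → ℝ) (hx : ∀ i, x i ≠ 0 → i ∈ S)
    (u : Fin N → ℝ)
    (γ₁ : ℝ) (hγ₁ : 0 < γ₁)
    (θ₁ θ₂ : ℝ)
    (hθ₁ : θ₁ = γ₁ * gmc A * l1norm (x - xstar))
    (hθ₂ : θ₂ = gmc A * (l1norm (u - xstar)
      + (((N : ℝ) - (S.card : ℝ)) / ((S.card : ℝ) - 1)) * l1norm u))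
    (v w : Fin N → ℝ)
    (hv : v = soft θ₁ (x + γ₁ • W.transpose.mulVec (b - A.mulVec x)))
    (hw : w = soft θ₂ (u + W.transpose.mulVec (b - A.mulVec u)))
    (α : ℝ)
    (hα : (θ₁ ≠ 0 → θ₂ / (θ₁ + θ₂) ≤ α ∧ α < 1) ∧ (θ₁ = 0 → α = 1))
    (xp : Fin N → ℝ) (hxp : xp = α • v + (1 - α) • w) :
    (∀ i, xp i ≠ 0 → i ∈ S) ∧
    l1norm (xp - xstar) ≤
      (2 * gmc A * γ₁ * (2 * (S.card : ℝ) - 1) + |1 - γ₁|) * l1norm (x - xstar) := by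
  classical
  obtain ⟨hW1, hW2⟩ := hW
  set μ := gmc A with hμdef
  clear_value μ
  have hN4 : 4 ≤ N := by omega
  -- coherence bounds
  have hfin : ({c : ℝ | ∃ i j : Fin N, i ≠ j ∧ c = |∑ k, W k i * A k j|}).Finite := by
    apply Set.Finite.subset (Set.finite_range (fun p : Fin N × Fin N => |∑ k, W k p.1 * A k p.2|))
    rintro r ⟨i, j, -, rfl⟩
    exact ⟨(i, j), rfl⟩
  have hcbd : ∀ i j : Fin N, i ≠ j → |∑ k, W k i * A k j| ≤ μ := by
    intro i j hij
    rw [← hW2]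
    exact le_csSup hfin.bddAbove ⟨i, j, hij, rfl⟩
  have hμ0 : 0 ≤ μ :=
    le_trans (abs_nonneg _) (hcbd ⟨0, by omega⟩ ⟨1, by omega⟩ (by simp [Fin.ext_iff]))
  -- key formula
  have hkey : ∀ (y : Fin N → ℝ) (i : Fin N),
      (W.transpose.mulVec (b - A.mulVec y)) i
        = (xstar i - y i) + ∑ j ∈ Finset.univ.erase i, (∑ k, W k i * A k j) * (xstar j - y j) := by
    intro y i
    have h1 : (W.transpose.mulVec (b - A.mulVec y)) i
        = ∑ j, (∑ k, W k i * A k j) * (xstar j - y j) := by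
      calc (W.transpose.mulVec (b - A.mulVec y)) i
          = ∑ k, W k i * ((A.mulVec xstar) k - (A.mulVec y) k) := by
            simp [Matrix.mulVec, dotProduct, Matrix.transpose_apply, hb]
        _ = ∑ k, ∑ j, W k i * A k j * (xstar j - y j) := by
            refine Finset.sum_congr rfl fun k _ => ?_
            simp only [Matrix.mulVec, dotProduct]
            rw [← Finset.sum_sub_distrib, Finset.mul_sum]
            refine Finset.sum_congr rfl fun j _ => by ring
        _ = ∑ j, ∑ k, W k i * A k j * (xstar j - y j) := Finset.sum_comm
        _ = ∑ j, (∑ k, W k i * A k j) * (xstar j - y j) := by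
            refine Finset.sum_congr rfl fun j _ => (Finset.sum_mul _ _ _).symm
    rw [h1, ← Finset.add_sum_erase Finset.univ _ (Finset.mem_univ i), hW1 i, one_mul]
  -- generic bound on off-diagonal sums
  have hD : ∀ (y : Fin N → ℝ) (i : Fin N),
      |∑ j ∈ Finset.univ.erase i, (∑ k, W k i * A k j) * (xstar j - y j)|
        ≤ μ * ((∑ j, |y j - xstar j|) - |y i - xstar i|) := by
    intro y i
    calc |∑ j ∈ Finset.univ.erase i, (∑ k, W k i * A k j) * (xstar j - y j)|
        ≤ ∑ j ∈ Finset.univ.erase i, |(∑ k, W k i * A k j) * (xstar j - y j)| :=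
          Finset.abs_sum_le_sum_abs _ _
      _ ≤ ∑ j ∈ Finset.univ.erase i, μ * |y j - xstar j| := by
          refine Finset.sum_le_sum fun j hj => ?_
          rw [abs_mul, abs_sub_comm]
          exact mul_le_mul_of_nonneg_right (hcbd i j (Ne.symm (Finset.mem_erase.1 hj).1))
            (abs_nonneg _)
      _ = μ * ∑ j ∈ Finset.univ.erase i, |y j - xstar j| := (Finset.mul_sum _ _ _).symm
      _ = μ * ((∑ j, |y j - xstar j|) - |y i - xstar i|) := by
          rw [← Finset.add_sum_erase Finset.univ (fun j => |y j - xstar j|) (Finset.mem_univ i)]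
          ring
  -- zero off support
  have hx0 : ∀ i, i ∉ S → x i = 0 := fun i hi => by_contra fun h => hi (hx i h)
  have hs0 : ∀ i, i ∉ S → xstar i = 0 := fun i hi => by_contra fun h => hi (hsupp i h)
  -- names for the correlation vectors
  set Gx := W.transpose.mulVec (b - A.mulVec x) with hGxdef
  set Gu := W.transpose.mulVec (b - A.mulVec u) with hGudef
  set L := l1norm (x - xstar) with hLdef
  set U := l1norm (u - xstar) with hUdef
  clear_value Gx Gu L U
  have hLsum : L = ∑ i, |x i - xstar i| := by
    rw [hLdef]; simp [l1norm]
  have hUsum : U = ∑ i, |u i - xstar i| := by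
    rw [hUdef]; simp [l1norm]
  have hL0 : 0 ≤ L := by rw [hLsum]; exact Finset.sum_nonneg fun i _ => abs_nonneg _
  have hU0 : 0 ≤ U := by rw [hUsum]; exact Finset.sum_nonneg fun i _ => abs_nonneg _
  have hLu0 : 0 ≤ l1norm u := Finset.sum_nonneg fun i _ => abs_nonneg _
  have hGx : ∀ i, |Gx i - (xstar i - x i)| ≤ μ * (L - |x i - xstar i|) := by
    intro i
    have h := hkey x i
    rw [← hGxdef] at h
    rw [h, add_sub_cancel_left, hLsum]
    exact hD x i
  have hGu : ∀ i, |Gu i - (xstar i - u i)| ≤ μ * (U - |u i - xstar i|) := by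
    intro i
    have h := hkey u i
    rw [← hGudef] at h
    rw [h, add_sub_cancel_left, hUsum]
    exact hD u i
  -- card facts
  have hc2 : (2:ℝ) ≤ (S.card:ℝ) := by exact_mod_cast hS2
  have hcN : 2*(S.card:ℝ) ≤ (N:ℝ) := by exact_mod_cast hSN
  have hc1ne : (S.card:ℝ) - 1 ≠ 0 := by linarith
  -- θ nonneg
  have hρ0 : 0 ≤ ((N:ℝ) - (S.card:ℝ))/((S.card:ℝ)-1) := div_nonneg (by linarith) (by linarith)
  have hθ₁0 : 0 ≤ θ₁ := by
    rw [hθ₁]; exact mul_nonneg (mul_nonneg hγ₁.le hμ0) hL0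
  have hθ₂0 : 0 ≤ θ₂ := by
    rw [hθ₂]; exact mul_nonneg hμ0 (add_nonneg hU0 (mul_nonneg hρ0 hLu0))
  -- component formulas
  have hvcomp : ∀ i, v i = Real.sign (x i + γ₁ * Gx i) * max (|x i + γ₁ * Gx i| - θ₁) 0 := by
    intro i; rw [hv]; simp [soft, smul_eq_mul]
  have hwcomp : ∀ i, w i = Real.sign (u i + Gu i) * max (|u i + Gu i| - θ₂) 0 := by
    intro i; rw [hw]; simp [soft]
  -- support of v and w
  have hv0 : ∀ i, i ∉ S → v i = 0 := by
    intro i hi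
    rw [hvcomp i]
    apply soft_eq_zero'
    have h := hGx i
    rw [hx0 i hi, hs0 i hi] at h
    simp only [sub_self, sub_zero, abs_zero] at h
    rw [hx0 i hi, zero_add, abs_mul, abs_of_pos hγ₁, hθ₁]
    nlinarith [abs_nonneg (Gx i)]
  have hw0 : ∀ i, i ∉ S → w i = 0 := by
    intro i hi
    rw [hwcomp i]
    apply soft_eq_zero'
    have h := hGu i
    rw [hs0 i hi] at h
    have h2 : |u i + Gu i| ≤ μ * (U - |u i - 0|) := by
      have : u i + Gu i = Gu i - (0 - u i) := by ring
      rw [this]; exact h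
    have h3 : μ * (U - |u i - 0|) ≤ μ * U :=
      mul_le_mul_of_nonneg_left (by linarith [abs_nonneg (u i - 0)]) hμ0
    have h4 : μ * U ≤ θ₂ := by
      rw [hθ₂]
      nlinarith [mul_nonneg hμ0 (mul_nonneg hρ0 hLu0)]
    linarith
  have hxp0 : ∀ i, i ∉ S → xp i = 0 := by
    intro i hi
    rw [hxp]
    simp [hv0 i hi, hw0 i hi]
  refine ⟨fun i hne => by_contra fun hi => hne (hxp0 i hi), ?_⟩
  -- α facts
  have hαfacts : 0 ≤ α ∧ α ≤ 1 ∧ (1-α)*θ₂ ≤ θ₁ := by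
    by_cases h0 : θ₁ = 0
    · rw [hα.2 h0, h0]; norm_num
    · obtain ⟨h1, h2⟩ := hα.1 h0
      have hp : 0 < θ₁ := lt_of_le_of_ne hθ₁0 (Ne.symm h0)
      have hsum : 0 < θ₁ + θ₂ := by linarith
      have h3 : θ₂ ≤ α * (θ₁ + θ₂) := (div_le_iff₀ hsum).1 h1
      refine ⟨le_trans (div_nonneg hθ₂0 hsum.le) h1, h2.le, ?_⟩
      nlinarith
  obtain ⟨hα0, hα1, hαθ⟩ := hαfacts
  -- sum of |x - xstar| over S
  have hsumS : ∀ z : Fin N → ℝ, (∀ i, i ∉ S → z i = 0) →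
      ∑ i ∈ S, |z i| = ∑ i, |z i| := by
    intro z hz
    exact Finset.sum_subset (Finset.subset_univ S) (fun i _ hi => by rw [hz i hi, abs_zero])
  have hES : ∑ i ∈ S, |x i - xstar i| = L := by
    rw [hLsum]
    exact hsumS (fun i => x i - xstar i) (fun i hi => by show x i - xstar i = 0; rw [hx0 i hi, hs0 i hi, sub_zero])
  -- bound on Sv
  have hSv : ∑ i ∈ S, |v i - xstar i|
      ≤ (|1 - γ₁| + γ₁*μ*((S.card:ℝ)-1))*L + (S.card:ℝ)*θ₁ := by
    have hper : ∀ i ∈ S, |v i - xstar i|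
        ≤ |1 - γ₁| * |x i - xstar i| + γ₁ * (μ * (L - |x i - xstar i|)) + θ₁ := by
      intro i _
      have h1 : |v i - (x i + γ₁ * Gx i)| ≤ θ₁ := by
        rw [hvcomp i]; exact soft_sub_le' hθ₁0
      have h2 : (x i + γ₁ * Gx i) - xstar i
          = (1-γ₁)*(x i - xstar i) + γ₁ * (Gx i - (xstar i - x i)) := by ring
      have h3 : |(x i + γ₁ * Gx i) - xstar i|
          ≤ |1 - γ₁| * |x i - xstar i| + γ₁ * |Gx i - (xstar i - x i)| := by
        rw [h2]
        refine le_trans (abs_add_le _ _) ?_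
        rw [abs_mul, abs_mul, abs_of_pos hγ₁]
      have h4 : γ₁ * |Gx i - (xstar i - x i)| ≤ γ₁ * (μ * (L - |x i - xstar i|)) :=
        mul_le_mul_of_nonneg_left (hGx i) hγ₁.le
      have h5 := abs_sub_le (v i) (x i + γ₁ * Gx i) (xstar i)
      linarith
    calc ∑ i ∈ S, |v i - xstar i|
        ≤ ∑ i ∈ S, (|1 - γ₁| * |x i - xstar i| + γ₁ * (μ * (L - |x i - xstar i|)) + θ₁) :=
          Finset.sum_le_sum hper
      _ = |1 - γ₁| * L + γ₁*μ*((S.card:ℝ)*L - L) + (S.card:ℝ)*θ₁ := by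
          rw [Finset.sum_add_distrib, Finset.sum_add_distrib, ← Finset.mul_sum, hES,
            ← Finset.mul_sum, ← Finset.mul_sum, Finset.sum_sub_distrib, Finset.sum_const,
            nsmul_eq_mul, hES, Finset.sum_const, nsmul_eq_mul]
          ring
      _ = (|1 - γ₁| + γ₁*μ*((S.card:ℝ)-1))*L + (S.card:ℝ)*θ₁ := by ring
  -- bound on Sw
  have hFS : U - l1norm u ≤ ∑ i ∈ S, |u i - xstar i| := by
    have h1 := Finset.sum_add_sum_compl S (fun i => |u i - xstar i|)
    have h2 : ∑ i ∈ Sᶜ, |u i - xstar i| ≤ l1norm u := by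
      have he : ∀ i ∈ Sᶜ, |u i - xstar i| = |u i| := fun i hi => by
        rw [hs0 i (Finset.mem_compl.1 hi), sub_zero]
      rw [Finset.sum_congr rfl he]
      exact Finset.sum_le_sum_of_subset_of_nonneg (Finset.subset_univ _)
        (fun i _ _ => abs_nonneg _)
    rw [hUsum]
    linarith
  have hSw : ∑ i ∈ S, |w i - xstar i| ≤ (2*(S.card:ℝ)-1)*θ₂ := by
    have hper : ∀ i ∈ S, |w i - xstar i| ≤ μ*(U - |u i - xstar i|) + θ₂ := by
      intro i _
      have h1 : |w i - (u i + Gu i)| ≤ θ₂ := by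
        rw [hwcomp i]; exact soft_sub_le' hθ₂0
      have h2 : |(u i + Gu i) - xstar i| ≤ μ*(U - |u i - xstar i|) := by
        have he : (u i + Gu i) - xstar i = Gu i - (xstar i - u i) := by ring
        rw [he]; exact hGu i
      have h3 := abs_sub_le (w i) (u i + Gu i) (xstar i)
      linarith
    have hcc : ((N:ℝ)-(S.card:ℝ))/((S.card:ℝ)-1) * ((S.card:ℝ)-1) = (N:ℝ)-(S.card:ℝ) :=
      div_mul_cancel₀ _ hc1ne
    have hθ₂' : ((S.card:ℝ)-1) * θ₂
        = μ*(((S.card:ℝ)-1)*U + ((N:ℝ)-(S.card:ℝ))*l1norm u) := by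
      rw [hθ₂]
      linear_combination μ * l1norm u * hcc
    calc ∑ i ∈ S, |w i - xstar i|
        ≤ ∑ i ∈ S, (μ*(U - |u i - xstar i|) + θ₂) := Finset.sum_le_sum hper
      _ = μ*((S.card:ℝ)*U - ∑ i ∈ S, |u i - xstar i|) + (S.card:ℝ)*θ₂ := by
          rw [Finset.sum_add_distrib, ← Finset.mul_sum, Finset.sum_sub_distrib,
            Finset.sum_const, nsmul_eq_mul, Finset.sum_const, nsmul_eq_mul]
      _ ≤ (2*(S.card:ℝ)-1)*θ₂ := by
          have step1 : μ*((S.card:ℝ)*U - ∑ i ∈ S, |u i - xstar i|)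
              ≤ μ*(((S.card:ℝ)-1)*U + l1norm u) :=
            mul_le_mul_of_nonneg_left (by linarith) hμ0
          have hLu' : l1norm u ≤ ((N:ℝ)-(S.card:ℝ))*l1norm u := by
            nlinarith [mul_nonneg (show (0:ℝ) ≤ (N:ℝ)-(S.card:ℝ)-1 by linarith) hLu0]
          have step2 : μ*(((S.card:ℝ)-1)*U + l1norm u) ≤ ((S.card:ℝ)-1)*θ₂ := by
            rw [hθ₂']
            exact mul_le_mul_of_nonneg_left (by linarith) hμ0
          linarith
  -- final assembly
  have hTsum : l1norm (xp - xstar) = ∑ i ∈ S, |xp i - xstar i| := by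
    have h1 : l1norm (xp - xstar) = ∑ i, |xp i - xstar i| := by simp [l1norm]
    rw [h1]
    exact (hsumS (fun i => xp i - xstar i)
      (fun i hi => by show xp i - xstar i = 0; rw [hxp0 i hi, hs0 i hi, sub_zero])).symm
  have hper2 : ∀ i ∈ S, |xp i - xstar i|
      ≤ α*|v i - xstar i| + (1-α)*|w i - xstar i| := by
    intro i _
    have he : xp i - xstar i = α*(v i - xstar i) + (1-α)*(w i - xstar i) := by
      rw [hxp]; simp [smul_eq_mul]; ring
    rw [he]
    calc |α*(v i - xstar i) + (1-α)*(w i - xstar i)|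
        ≤ |α*(v i - xstar i)| + |(1-α)*(w i - xstar i)| := abs_add_le _ _
      _ = α*|v i - xstar i| + (1-α)*|w i - xstar i| := by
          rw [abs_mul, abs_mul, abs_of_nonneg hα0, abs_of_nonneg (by linarith : (0:ℝ) ≤ 1-α)]
  have hSv0 : 0 ≤ ∑ i ∈ S, |v i - xstar i| := Finset.sum_nonneg fun i _ => abs_nonneg _
  have hSw0 : 0 ≤ ∑ i ∈ S, |w i - xstar i| := Finset.sum_nonneg fun i _ => abs_nonneg _
  have hc0 : (0:ℝ) ≤ 2*(S.card:ℝ)-1 := by linarith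
  calc l1norm (xp - xstar) = ∑ i ∈ S, |xp i - xstar i| := hTsum
    _ ≤ ∑ i ∈ S, (α*|v i - xstar i| + (1-α)*|w i - xstar i|) := Finset.sum_le_sum hper2
    _ = α*(∑ i ∈ S, |v i - xstar i|) + (1-α)*(∑ i ∈ S, |w i - xstar i|) := by
        rw [Finset.sum_add_distrib, ← Finset.mul_sum, ← Finset.mul_sum]
    _ ≤ (∑ i ∈ S, |v i - xstar i|) + (2*(S.card:ℝ)-1)*θ₁ := by
        have h1 : α*(∑ i ∈ S, |v i - xstar i|) ≤ ∑ i ∈ S, |v i - xstar i| := by nlinarith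
        have h2 : (1-α)*(∑ i ∈ S, |w i - xstar i|) ≤ (1-α)*((2*(S.card:ℝ)-1)*θ₂) :=
          mul_le_mul_of_nonneg_left hSw (by linarith)
        have h3 : (1-α)*((2*(S.card:ℝ)-1)*θ₂) ≤ (2*(S.card:ℝ)-1)*θ₁ := by
          nlinarith [mul_le_mul_of_nonneg_left hαθ hc0]
        linarith
    _ ≤ (|1 - γ₁| + γ₁*μ*((S.card:ℝ)-1))*L + (S.card:ℝ)*θ₁ + (2*(S.card:ℝ)-1)*θ₁ := by
        linarith
    _ = (2*μ*γ₁*(2*(S.card:ℝ)-1) + |1-γ₁|)*L := by rw [hθ₁]; ring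
end

section
/- Theorem 6 (upper bound of recovery error for HALISTA, with γ₂ⁿ ≡ 1). Assume μ := μ(A) > 0, let S ⊆ {1, …, N} with 2 ≤ |S|, 2|S| ≤ N and |S| < (2 + 1/μ)/4, let B_x > 0, x* ∈ X(B_x, S), b = A x*, and fix W ∈ W_s(A). Let x⁰ = 0 and, for every n: γ₁ⁿ ∈ (0, 2/(1 + 4μ|S| − 2μ)); θ₁ⁿ = γ₁ⁿμ‖xⁿ − x*‖₁ and vⁿ = S_{θ₁ⁿ}(xⁿ + γ₁ⁿWᵀ(b − Axⁿ)); uⁿ ∈ ℝ^N arbitrary; θ₂ⁿ = μ‖uⁿ − x*‖₁ + μ((N − |S|)/(|S| − 1))·‖uⁿ‖₁ and wⁿ = S_{θ₂ⁿ}(uⁿ + Wᵀ(b − Auⁿ)); xⁿ⁺¹ = αⁿvⁿ + (1 − αⁿ)wⁿ with θ₂ⁿ/(θ₁ⁿ + θ₂ⁿ) ≤ αⁿ < 1 if θ₁ⁿ ≠ 0 and αⁿ = 1 if θ₁ⁿ = 0. Then for every n ∈ ℕ: supp(xⁿ) ⊆ S and ‖xⁿ − x*‖₂ ≤ |S|·B_x·exp(−Σ_{k=0}^{n−1}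 c_a^k), where c_a^k = −log(2μγ₁^k(2|S| − 1) + |1 − γ₁^k|) > 0. -/
open scoped Classical

/-! Let `G = WᵀA`: it has unit diagonal and off-diagonal entries bounded by `μ`, so a gradient
step `y + γWᵀ(b - Ay)` has coordinate error `(1 - γ)eᵢ` plus a leakage of at most
`γμ(‖e‖₁ - |eᵢ|)`. Both thresholds dominate this leakage off `S`, so both soft-thresholded
iterates stay supported in `S`, while thresholding costs at most `θ` per coordinate of `S`.
Summing over `S`, the ISTA iterate has `ℓ¹` error at most `(γμ(2|S| - 1) + |1 - γ|)‖e‖₁` and the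
correction iterate at most `(2|S| - 1)θ₂`; the choice of `α` gives `(1 - α)θ₂ ≤ αθ₁`, so the
mixture contracts the `ℓ¹` error by `2μγ(2|S| - 1) + |1 - γ| = e^{-c_a} < 1`. Iterate from
`‖x*‖₁ ≤ |S|B_x` and use `‖·‖₂ ≤ ‖·‖₁`. -/

open Finset Matrix

section Norms

variable {N : ℕ}

lemma l1norm_nonneg (x : Fin N → ℝ) : 0 ≤ l1norm x :=
  sum_nonneg fun _ _ => abs_nonneg _

lemma l2norm_le_l1norm (x : Fin N → ℝ) : l2norm x ≤ l1norm x :=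
  Real.sqrt_le_iff.2 ⟨l1norm_nonneg x, by
    simpa [l1norm, sq_abs] using
      sum_sq_le_sq_sum_of_nonneg (s := univ) fun i _ => abs_nonneg (x i)⟩

lemma l1norm_eq_sum_of_eq_zero {S : Finset (Fin N)} {x : Fin N → ℝ} (hx : ∀ i ∉ S, x i = 0) :
    l1norm x = ∑ i ∈ S, |x i| :=
  (sum_subset (subset_univ S) fun i _ hi => by simp [hx i hi]).symm

lemma l1norm_le_card_mul {S : Finset (Fin N)} {x : Fin N → ℝ} {B : ℝ}
    (hx : ∀ i ∉ S, x i = 0) (hB : ∀ i, |x i| ≤ B) : l1norm x ≤ #S * B := by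
  rw [l1norm_eq_sum_of_eq_zero hx, ← nsmul_eq_mul]
  exact sum_le_card_nsmul S _ B fun i _ => hB i

lemma l1norm_sub_le_sum_add_l1norm {S : Finset (Fin N)} {u xstar : Fin N → ℝ}
    (hxstar : ∀ i ∉ S, xstar i = 0) :
    l1norm (u - xstar) ≤ ∑ i ∈ S, |(u - xstar) i| + l1norm u := by
  rw [l1norm, ← sum_add_sum_compl S]
  gcongr
  calc ∑ i ∈ Sᶜ, |(u - xstar) i| = ∑ i ∈ Sᶜ, |u i| :=
        sum_congr rfl fun i hi => by simp [hxstar i (mem_compl.1 hi)]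
    _ ≤ l1norm u := sum_le_sum_of_subset_of_nonneg (subset_univ _) fun _ _ _ => abs_nonneg _

lemma l1norm_convexComb_sub_le {α : ℝ} (hα0 : 0 ≤ α) (hα1 : α ≤ 1) (v w x : Fin N → ℝ) :
    l1norm (α • v + (1 - α) • w - x) ≤ α * l1norm (v - x) + (1 - α) * l1norm (w - x) := by
  simp only [l1norm, mul_sum, ← sum_add_distrib]
  refine sum_le_sum fun i _ => ?_
  have hsplit : (α • v + (1 - α) • w - x) i = α * (v - x) i + (1 - α) * (w - x) i := by
    simp only [Pi.sub_apply, Pi.add_apply, Pi.smul_apply, smul_eq_mul]; ring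
  rw [hsplit]
  refine (abs_add_le _ _).trans_eq ?_
  rw [abs_mul, abs_mul, abs_of_nonneg hα0, abs_of_nonneg (sub_nonneg.2 hα1)]

end Norms

section SoftThresholding

variable {N : ℕ} {θ : ℝ} {z : Fin N → ℝ} {i : Fin N}

lemma soft_apply_eq_zero (h : |z i| ≤ θ) : soft θ z i = 0 := by
  simp [soft, max_eq_right (sub_nonpos.2 h)]

lemma abs_soft_apply_sub_le (hθ : 0 ≤ θ) : |soft θ z i - z i| ≤ θ := by
  rcases le_or_gt |z i| θ with h | h
  · simpa [soft_apply_eq_zero h] using h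
  simp only [soft, max_eq_left (sub_nonneg.2 h.le)]
  rcases lt_trichotomy (z i) 0 with hz | hz | hz
  · rw [Real.sign_of_neg hz, abs_of_neg hz, show -1 * (-z i - θ) - z i = θ by ring,
      abs_of_nonneg hθ]
  · simp [hz] at h; linarith
  · rw [Real.sign_of_pos hz, abs_of_pos hz, show 1 * (z i - θ) - z i = -θ by ring, abs_neg,
      abs_of_nonneg hθ]

end SoftThresholding

section Coherence

variable {M N : ℕ} {A W : Matrix (Fin M) (Fin N) ℝ}

lemma transpose_mul_apply_self (hW : memWs A W) (i : Fin N) : (Wᵀ * A) i i = 1 := by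
  simpa [mul_apply] using hW.1 i

lemma abs_transpose_mul_apply_le (hW : memWs A W) {i j : Fin N} (hij : i ≠ j) :
    |(Wᵀ * A) i j| ≤ gmc A := by
  rw [← hW.2]
  refine le_csSup ?_ ⟨i, j, hij, by simp [mul_apply]⟩
  refine (Set.finite_range fun p : Fin N × Fin N => |∑ k, W k p.1 * A k p.2|).subset ?_
    |>.bddAbove
  rintro c ⟨i, j, _, rfl⟩
  exact ⟨(i, j), rfl⟩

end Coherence

section UnitDiagonal

variable {N : ℕ}

lemma abs_offDiag_sum_le {G : Matrix (Fin N) (Fin N) ℝ} {μ : ℝ}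
    (hG : ∀ i j, i ≠ j → |G i j| ≤ μ) (e : Fin N → ℝ) (i : Fin N) :
    |∑ j ∈ univ.erase i, G i j * e j| ≤ μ * (l1norm e - |e i|) := by
  calc |∑ j ∈ univ.erase i, G i j * e j| ≤ ∑ j ∈ univ.erase i, |G i j| * |e j| := by
        simpa only [abs_mul] using abs_sum_le_sum_abs (fun j => G i j * e j) (univ.erase i)
    _ ≤ ∑ j ∈ univ.erase i, μ * |e j| :=
        sum_le_sum fun j hj => by gcongr; exact hG i j (ne_of_mem_erase hj).symm
    _ = μ * (l1norm e - |e i|) := by rw [← mul_sum, sum_erase_eq_sub (mem_univ i), l1norm]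

lemma abs_sub_smul_mulVec_apply_le {G : Matrix (Fin N) (Fin N) ℝ} {μ γ : ℝ} (hγ : 0 ≤ γ)
    (hdiag : ∀ i, G i i = 1) (hG : ∀ i j, i ≠ j → |G i j| ≤ μ) (e : Fin N → ℝ) (i : Fin N) :
    |(e - γ • G *ᵥ e) i| ≤ |1 - γ| * |e i| + γ * μ * (l1norm e - |e i|) := by
  have hrow : (G *ᵥ e) i = e i + ∑ j ∈ univ.erase i, G i j * e j := by
    rw [mulVec, dotProduct, ← add_sum_erase _ _ (mem_univ i), hdiag, one_mul]
  have hsplit : (e - γ • G *ᵥ e) i = (1 - γ) * e i - γ * ∑ j ∈ univ.erase i, G i j * e j := by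
    simp only [Pi.sub_apply, Pi.smul_apply, smul_eq_mul, hrow]; ring
  calc |(e - γ • G *ᵥ e) i|
      ≤ |1 - γ| * |e i| + γ * |∑ j ∈ univ.erase i, G i j * e j| := by
        rw [hsplit, ← abs_mul, ← abs_of_nonneg hγ, ← abs_mul, abs_of_nonneg hγ]
        exact abs_sub _ _
    _ ≤ |1 - γ| * |e i| + γ * μ * (l1norm e - |e i|) := by
        rw [mul_assoc]; gcongr; exact abs_offDiag_sum_le hG e i

end UnitDiagonal

noncomputable def gradStep {M N : ℕ} (A W : Matrix (Fin M) (Fin N) ℝ) (b : Fin M → ℝ) (γ : ℝ)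
    (y : Fin N → ℝ) : Fin N → ℝ :=
  y + γ • Wᵀ *ᵥ (b - A *ᵥ y)

/-- The factor `e^{-c_a}` by which one HALISTA iteration contracts the `ℓ¹` error. -/
def contractionFactor (μ s γ : ℝ) : ℝ := 2 * μ * γ * (2 * s - 1) + |1 - γ|

section Halista

variable {M N : ℕ} {A W : Matrix (Fin M) (Fin N) ℝ} {b : Fin M → ℝ} {xstar : Fin N → ℝ}
  {S : Finset (Fin N)} {γ θ : ℝ}

lemma gradStep_sub_eq (hb : b = A *ᵥ xstar) (γ : ℝ) (y : Fin N → ℝ) :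
    gradStep A W b γ y - xstar = (y - xstar) - γ • (Wᵀ * A) *ᵥ (y - xstar) := by
  rw [gradStep, hb, ← mulVec_mulVec, mulVec_sub, mulVec_sub, mulVec_sub]
  module

lemma abs_gradStep_sub_apply_le (hW : memWs A W) (hγ : 0 ≤ γ) (hb : b = A *ᵥ xstar)
    (y : Fin N → ℝ) (i : Fin N) :
    |gradStep A W b γ y i - xstar i|
      ≤ |1 - γ| * |(y - xstar) i| + γ * gmc A * (l1norm (y - xstar) - |(y - xstar) i|) := by
  rw [← Pi.sub_apply, gradStep_sub_eq hb]
  exact abs_sub_smul_mulVec_apply_le hγ (transpose_mul_apply_self hW)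
    (fun _ _ => abs_transpose_mul_apply_le hW) _ i

lemma soft_gradStep_apply_eq_zero (hW : memWs A W) (hγ : 0 ≤ γ) (hb : b = A *ᵥ xstar)
    {y : Fin N → ℝ} {i : Fin N} (hi : xstar i = 0)
    (hθ : |1 - γ| * |(y - xstar) i| + γ * gmc A * (l1norm (y - xstar) - |(y - xstar) i|) ≤ θ) :
    soft θ (gradStep A W b γ y) i = 0 :=
  soft_apply_eq_zero <| by simpa [hi] using (abs_gradStep_sub_apply_le hW hγ hb y i).trans hθ

lemma sum_abs_soft_gradStep_sub_le (hW : memWs A W) (hγ : 0 ≤ γ) (hb : b = A *ᵥ xstar)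
    (hθ : 0 ≤ θ) (S : Finset (Fin N)) (y : Fin N → ℝ) :
    ∑ i ∈ S, |soft θ (gradStep A W b γ y) i - xstar i|
      ≤ #S * θ + |1 - γ| * ∑ i ∈ S, |(y - xstar) i|
        + γ * gmc A * (#S * l1norm (y - xstar) - ∑ i ∈ S, |(y - xstar) i|) := by
  calc ∑ i ∈ S, |soft θ (gradStep A W b γ y) i - xstar i|
      ≤ ∑ i ∈ S, (θ + (|1 - γ| * |(y - xstar) i|
          + γ * gmc A * (l1norm (y - xstar) - |(y - xstar) i|))) := sum_le_sum fun i _ =>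
        (abs_sub_le _ (gradStep A W b γ y i) _).trans
          (add_le_add (abs_soft_apply_sub_le hθ) (abs_gradStep_sub_apply_le hW hγ hb y i))
    _ = _ := by
      simp only [sum_add_distrib, sum_const, nsmul_eq_mul, ← mul_sum, sum_sub_distrib, add_assoc]

lemma ista_step (hW : memWs A W) (hμ : 0 ≤ gmc A) (hγ : 0 ≤ γ) (hb : b = A *ᵥ xstar)
    (hxstar : ∀ i ∉ S, xstar i = 0) {y : Fin N → ℝ} (hy : ∀ i ∉ S, y i = 0)
    (hθ : θ = γ * gmc A * l1norm (y - xstar)) :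
    (∀ i ∉ S, soft θ (gradStep A W b γ y) i = 0) ∧
      l1norm (soft θ (gradStep A W b γ y) - xstar)
        ≤ (γ * gmc A * (2 * #S - 1) + |1 - γ|) * l1norm (y - xstar) := by
  have he : ∀ i ∉ S, (y - xstar) i = 0 := fun i hi => by simp [hy i hi, hxstar i hi]
  have hvS : ∀ i ∉ S, soft θ (gradStep A W b γ y) i = 0 := fun i hi =>
    soft_gradStep_apply_eq_zero hW hγ hb (hxstar i hi) (by simp [he i hi, hθ])
  refine ⟨hvS, ?_⟩
  rw [l1norm_eq_sum_of_eq_zero fun i hi => by simp [hvS i hi, hxstar i hi]]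
  have hθ0 : 0 ≤ θ := hθ ▸ mul_nonneg (mul_nonneg hγ hμ) (l1norm_nonneg _)
  refine (sum_abs_soft_gradStep_sub_le hW hγ hb hθ0 S y).trans_eq ?_
  rw [← l1norm_eq_sum_of_eq_zero he, hθ]
  ring

lemma mul_l1norm_le_correctionThreshold {u : Fin N → ℝ} (hμ : 0 ≤ gmc A) (hS1 : 1 ≤ #S)
    (hSN : #S ≤ N)
    (hθ : θ = gmc A * l1norm (u - xstar)
      + gmc A * (((N : ℝ) - (S.card : ℝ)) / ((S.card : ℝ) - 1)) * l1norm u) :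
    gmc A * l1norm (u - xstar) ≤ θ := by
  have hfrac : 0 ≤ ((N : ℝ) - #S) / (#S - 1) :=
    div_nonneg (sub_nonneg.2 (by exact_mod_cast hSN)) (sub_nonneg.2 (by exact_mod_cast hS1))
  rw [hθ]
  exact le_add_of_nonneg_right (mul_nonneg (mul_nonneg hμ hfrac) (l1norm_nonneg _))

lemma correction_step (hW : memWs A W) (hμ : 0 ≤ gmc A) (hS2 : 2 ≤ #S) (hSN : 2 * #S ≤ N)
    (hb : b = A *ᵥ xstar) (hxstar : ∀ i ∉ S, xstar i = 0) {u : Fin N → ℝ}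
    (hθ : θ = gmc A * l1norm (u - xstar)
      + gmc A * (((N : ℝ) - (S.card : ℝ)) / ((S.card : ℝ) - 1)) * l1norm u) :
    (∀ i ∉ S, soft θ (gradStep A W b 1 u) i = 0) ∧
      l1norm (soft θ (gradStep A W b 1 u) - xstar) ≤ (2 * #S - 1) * θ := by
  have hs : (2 : ℝ) ≤ #S := by exact_mod_cast hS2
  have hNs : 2 * (#S : ℝ) ≤ N := by exact_mod_cast hSN
  have hF := mul_l1norm_le_correctionThreshold hμ (by omega) (by omega) hθ
  have hwS : ∀ i ∉ S, soft θ (gradStep A W b 1 u) i = 0 := fun i hi =>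
    soft_gradStep_apply_eq_zero hW zero_le_one hb (hxstar i hi) <| by
      simp only [sub_self, abs_zero, zero_mul, zero_add, one_mul]
      exact (mul_le_mul_of_nonneg_left (sub_le_self _ (abs_nonneg _)) hμ).trans hF
  refine ⟨hwS, ?_⟩
  rw [l1norm_eq_sum_of_eq_zero fun i hi => by simp [hwS i hi, hxstar i hi]]
  have hθ0 : 0 ≤ θ := (mul_nonneg hμ (l1norm_nonneg _)).trans hF
  refine (sum_abs_soft_gradStep_sub_le hW zero_le_one hb hθ0 S u).trans ?_
  -- `θ` is chosen so that `(|S| - 1) θ` absorbs the off-support mass `‖u‖₁`.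
  have hθ' : ((#S : ℝ) - 1) * θ = gmc A * (#S - 1) * l1norm (u - xstar)
      + gmc A * (N - #S) * l1norm u := by
    have hs1 : (#S : ℝ) - 1 ≠ 0 := by linarith
    rw [hθ]; field_simp
  have hoff : gmc A * (l1norm (u - xstar) - ∑ i ∈ S, |(u - xstar) i|) ≤ gmc A * l1norm u :=
    mul_le_mul_of_nonneg_left (by linarith [l1norm_sub_le_sum_add_l1norm (u := u) hxstar]) hμ
  have hU : 0 ≤ gmc A * l1norm u * (N - #S - 1) :=
    mul_nonneg (mul_nonneg hμ (l1norm_nonneg u)) (by linarith)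
  simp only [sub_self, abs_zero, zero_mul, add_zero, one_mul]
  linarith

lemma mixingWeight_bounds {θ₁ θ₂ α : ℝ} (hθ₁ : 0 ≤ θ₁) (hθ₂ : 0 ≤ θ₂)
    (hα : (θ₁ ≠ 0 → θ₂ / (θ₁ + θ₂) ≤ α ∧ α < 1) ∧ (θ₁ = 0 → α = 1)) :
    0 ≤ α ∧ α ≤ 1 ∧ (1 - α) * θ₂ ≤ α * θ₁ := by
  rcases hθ₁.eq_or_lt with h | h
  · simp [hα.2 h.symm, h.symm]
  obtain ⟨hlo, hhi⟩ := hα.1 h.ne'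
  have hpos : 0 < θ₁ + θ₂ := by linarith
  have := (div_le_iff₀ hpos).1 hlo
  exact ⟨(div_nonneg hθ₂ hpos.le).trans hlo, hhi.le, by linarith⟩

lemma halista_step (hW : memWs A W) (hμ : 0 ≤ gmc A) (hS2 : 2 ≤ #S) (hSN : 2 * #S ≤ N)
    (hb : b = A *ᵥ xstar) (hxstar : ∀ i ∉ S, xstar i = 0) {y u x' : Fin N → ℝ}
    {θ₁ θ₂ α : ℝ} (hy : ∀ i ∉ S, y i = 0) (hγ : 0 ≤ γ)
    (hθ₁ : θ₁ = γ * gmc A * l1norm (y - xstar))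
    (hθ₂ : θ₂ = gmc A * l1norm (u - xstar)
      + gmc A * (((N : ℝ) - (S.card : ℝ)) / ((S.card : ℝ) - 1)) * l1norm u)
    (hα : (θ₁ ≠ 0 → θ₂ / (θ₁ + θ₂) ≤ α ∧ α < 1) ∧ (θ₁ = 0 → α = 1))
    (hx' : x' = α • soft θ₁ (gradStep A W b γ y) + (1 - α) • soft θ₂ (gradStep A W b 1 u)) :
    (∀ i ∉ S, x' i = 0) ∧
      l1norm (x' - xstar) ≤ contractionFactor (gmc A) #S γ * l1norm (y - xstar) := by
  obtain ⟨hvS, hv⟩ := ista_step hW hμ hγ hb hxstar hy hθ₁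
  obtain ⟨hwS, hw⟩ := correction_step hW hμ hS2 hSN hb hxstar hθ₂
  have hθ₁0 : 0 ≤ θ₁ := hθ₁ ▸ mul_nonneg (mul_nonneg hγ hμ) (l1norm_nonneg _)
  have hθ₂0 : 0 ≤ θ₂ :=
    (mul_nonneg hμ (l1norm_nonneg _)).trans
      (mul_l1norm_le_correctionThreshold hμ (by omega) (by omega) hθ₂)
  obtain ⟨hα0, hα1, hαθ⟩ := mixingWeight_bounds hθ₁0 hθ₂0 hα
  refine ⟨fun i hi => by simp [hx', hvS i hi, hwS i hi], ?_⟩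
  have hs : (1 : ℝ) ≤ 2 * #S - 1 := by
    have : (1 : ℝ) ≤ #S := by exact_mod_cast (by omega : 1 ≤ #S)
    linarith
  have hq : 0 ≤ contractionFactor (gmc A) #S γ :=
    add_nonneg (mul_nonneg (by positivity) (by linarith)) (abs_nonneg _)
  calc l1norm (x' - xstar)
      ≤ α * l1norm (soft θ₁ (gradStep A W b γ y) - xstar)
        + (1 - α) * l1norm (soft θ₂ (gradStep A W b 1 u) - xstar) :=
        hx' ▸ l1norm_convexComb_sub_le hα0 hα1 _ _ _
    _ ≤ α * ((γ * gmc A * (2 * #S - 1) + |1 - γ|) * l1norm (y - xstar))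
        + (2 * #S - 1) * ((1 - α) * θ₂) := by
        rw [mul_left_comm (2 * (#S : ℝ) - 1)]
        gcongr
    -- the weight `α` lets the ISTA threshold `θ₁` pay for the correction threshold `θ₂`
    _ ≤ α * ((γ * gmc A * (2 * #S - 1) + |1 - γ|) * l1norm (y - xstar))
        + (2 * #S - 1) * (α * θ₁) := by gcongr
    _ = α * (contractionFactor (gmc A) #S γ * l1norm (y - xstar)) := by
        rw [hθ₁, contractionFactor]; ring
    _ ≤ contractionFactor (gmc A) #S γ * l1norm (y - xstar) :=
        mul_le_of_le_one_left (mul_nonneg hq (l1norm_nonneg _)) hα1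

end Halista

lemma contractionFactor_pos {μ s γ : ℝ} (hμ : 0 < μ) (hs : 1 ≤ s) (hγ : 0 < γ) :
    0 < contractionFactor μ s γ :=
  add_pos_of_pos_of_nonneg (mul_pos (by positivity) (by linarith)) (abs_nonneg _)

lemma contractionFactor_lt_one {μ s γ : ℝ} (hμ : 0 < μ) (hs : 1 ≤ s)
    (hsμ : s < (2 + 1 / μ) / 4) (hγ0 : 0 < γ) (hγ : γ < 2 / (1 + 4 * μ * s - 2 * μ)) :
    contractionFactor μ s γ < 1 := by
  have hμs : 2 * μ * (2 * s - 1) < 1 := by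
    have := (lt_div_iff₀ (by norm_num : (0 : ℝ) < 4)).1 hsμ
    rw [one_div, ← sub_lt_iff_lt_add', ← mul_lt_mul_iff_of_pos_left hμ,
      mul_inv_cancel₀ hμ.ne'] at this
    linarith
  rw [contractionFactor]
  rcases le_or_gt γ 1 with h | h
  · rw [abs_of_nonneg (sub_nonneg.2 h)]
    nlinarith
  · rw [abs_of_neg (sub_neg.2 h)]
    have := (lt_div_iff₀ (by nlinarith)).1 hγ
    nlinarith

lemma le_mul_exp_neg_sum {e c : ℕ → ℝ} {C : ℝ} (h0 : e 0 ≤ C)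
    (h : ∀ n, e (n + 1) ≤ Real.exp (-c n) * e n) (n : ℕ) :
    e n ≤ C * Real.exp (-∑ k ∈ range n, c k) := by
  induction n with
  | zero => simpa using h0
  | succ n ih =>
    calc e (n + 1) ≤ Real.exp (-c n) * (C * Real.exp (-∑ k ∈ range n, c k)) :=
          (h n).trans (by gcongr)
      _ = C * Real.exp (-∑ k ∈ range (n + 1), c k) := by
          rw [sum_range_succ, neg_add, Real.exp_add]; ring

theorem halista_recovery_general {M N : ℕ}
    (A : Matrix (Fin M) (Fin N) ℝ)
    (hμ : 0 < gmc A)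
    (S : Finset (Fin N)) (hS2 : 2 ≤ S.card) (hSN : 2 * S.card ≤ N)
    (hSμ : (S.card : ℝ) < (2 + 1 / gmc A) / 4)
    (Bx : ℝ)
    (xstar : Fin N → ℝ) (hsupp : ∀ i, xstar i ≠ 0 ↔ i ∈ S) (hxb : ∀ i, |xstar i| ≤ Bx)
    (b : Fin M → ℝ) (hb : b = A.mulVec xstar)
    (W : Matrix (Fin M) (Fin N) ℝ) (hW : memWs A W)
    (x v u w : ℕ → Fin N → ℝ)
    (γ₁ θ₁ θ₂ α : ℕ → ℝ)
    (hx0 : x 0 = 0)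
    (hγ₁ : ∀ n, 0 < γ₁ n ∧ γ₁ n < 2 / (1 + 4 * gmc A * (S.card : ℝ) - 2 * gmc A))
    (hθ₁ : ∀ n, θ₁ n = γ₁ n * gmc A * l1norm (x n - xstar))
    (hv : ∀ n, v n = soft (θ₁ n) (x n + γ₁ n • W.transpose.mulVec (b - A.mulVec (x n))))
    (hθ₂ : ∀ n, θ₂ n = gmc A * l1norm (u n - xstar)
      + gmc A * (((N : ℝ) - (S.card : ℝ)) / ((S.card : ℝ) - 1)) * l1norm (u n))
    (hw : ∀ n, w n = soft (θ₂ n) (u n + W.transpose.mulVec (b - A.mulVec (u n))))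
    (hα : ∀ n, (θ₁ n ≠ 0 → θ₂ n / (θ₁ n + θ₂ n) ≤ α n ∧ α n < 1) ∧ (θ₁ n = 0 → α n = 1))
    (hxs : ∀ n, x (n + 1) = α n • v n + (1 - α n) • w n)
    (ca : ℕ → ℝ)
    (hca : ∀ k, ca k =
      -Real.log (2 * gmc A * γ₁ k * (2 * (S.card : ℝ) - 1) + |1 - γ₁ k|)) :
    (∀ k, 0 < ca k) ∧
    ∀ n : ℕ, (∀ i, x n i ≠ 0 → i ∈ S) ∧
      l2norm (x n - xstar) ≤
        (S.card : ℝ) * Bx * Real.exp (-(∑ k ∈ Finset.range n, ca k)) := by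
  have hS1 : (1 : ℝ) ≤ S.card := by exact_mod_cast (by omega : 1 ≤ S.card)
  have hq : ∀ k, 0 < contractionFactor (gmc A) S.card (γ₁ k) := fun k =>
    contractionFactor_pos hμ hS1 (hγ₁ k).1
  have hxstar : ∀ i ∉ S, xstar i = 0 := fun i hi => not_not.1 (mt (hsupp i).1 hi)
  have hstep : ∀ n, (∀ i ∉ S, x n i = 0) → (∀ i ∉ S, x (n + 1) i = 0) ∧
      l1norm (x (n + 1) - xstar) ≤ Real.exp (-ca n) * l1norm (x n - xstar) := by
    intro n hxn
    have hexp : Real.exp (-ca n) = contractionFactor (gmc A) S.card (γ₁ n) := by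
      rw [hca n, neg_neg]; exact Real.exp_log (hq n)
    rw [hexp]
    exact halista_step hW hμ.le hS2 hSN hb hxstar hxn (hγ₁ n).1.le (hθ₁ n) (hθ₂ n) (hα n)
      (by rw [hxs n, hv n, hw n, gradStep, gradStep, one_smul])
  have hsuppx : ∀ n, ∀ i ∉ S, x n i = 0 := fun n => by
    induction n with
    | zero => simp [hx0]
    | succ n ih => exact (hstep n ih).1
  refine ⟨fun k => ?_, fun n => ⟨fun i hx => by_contra fun hi => hx (hsuppx n i hi), ?_⟩⟩
  · rw [hca k, neg_pos]
    exact Real.log_neg (hq k) (contractionFactor_lt_one hμ hS1 hSμ (hγ₁ k).1 (hγ₁ k).2)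
  calc l2norm (x n - xstar) ≤ l1norm (x n - xstar) := l2norm_le_l1norm _
    _ ≤ _ := le_mul_exp_neg_sum (e := fun n => l1norm (x n - xstar))
      (l1norm_le_card_mul (fun i hi => by simp [hx0, hxstar i hi])
        fun i => by simpa [hx0] using hxb i)
      (fun n => (hstep n (hsuppx n)).2) n

/-- Theorem 6: upper bound of recovery error for HALISTA (with γ₂ⁿ ≡ 1). -/
theorem halista_recovery {M N : ℕ} (hM : 0 < M) (hN : 0 < N)
    (A : Matrix (Fin M) (Fin N) ℝ)
    (hcols : ∀ j, l2norm (fun i => A i j) = 1)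
    (hμ : 0 < gmc A)
    (S : Finset (Fin N)) (hS2 : 2 ≤ S.card) (hSN : 2 * S.card ≤ N)
    (hSμ : (S.card : ℝ) < (2 + 1 / gmc A) / 4)
    (Bx : ℝ) (hBx : 0 < Bx)
    (xstar : Fin N → ℝ) (hsupp : ∀ i, xstar i ≠ 0 ↔ i ∈ S) (hxb : ∀ i, |xstar i| ≤ Bx)
    (b : Fin M → ℝ) (hb : b = A.mulVec xstar)
    (W : Matrix (Fin M) (Fin N) ℝ) (hW : memWs A W)
    (x v u w : ℕ → Fin N → ℝ)
    (γ₁ θ₁ θ₂ α : ℕ → ℝ)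
    (hx0 : x 0 = 0)
    (hγ₁ : ∀ n, 0 < γ₁ n ∧ γ₁ n < 2 / (1 + 4 * gmc A * (S.card : ℝ) - 2 * gmc A))
    (hθ₁ : ∀ n, θ₁ n = γ₁ n * gmc A * l1norm (x n - xstar))
    (hv : ∀ n, v n = soft (θ₁ n) (x n + γ₁ n • W.transpose.mulVec (b - A.mulVec (x n))))
    (hθ₂ : ∀ n, θ₂ n = gmc A * l1norm (u n - xstar)
      + gmc A * (((N : ℝ) - (S.card : ℝ)) / ((S.card : ℝ) - 1)) * l1norm (u n))
    (hw : ∀ n, w n = soft (θ₂ n) (u n + W.transpose.mulVec (b - A.mulVec (u n))))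
    (hα : ∀ n, (θ₁ n ≠ 0 → θ₂ n / (θ₁ n + θ₂ n) ≤ α n ∧ α n < 1) ∧ (θ₁ n = 0 → α n = 1))
    (hxs : ∀ n, x (n + 1) = α n • v n + (1 - α n) • w n)
    (ca : ℕ → ℝ)
    (hca : ∀ k, ca k =
      -Real.log (2 * gmc A * γ₁ k * (2 * (S.card : ℝ) - 1) + |1 - γ₁ k|)) :
    (∀ k, 0 < ca k) ∧
    ∀ n : ℕ, (∀ i, x n i ≠ 0 → i ∈ S) ∧
      l2norm (x n - xstar) ≤
        (S.card : ℝ) * Bx * Real.exp (-(∑ k ∈ Finset.range n, ca k)) :=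
  halista_recovery_general A hμ S hS2 hSN hSμ Bx xstar hsupp hxb b hb W hW x v u w γ₁ θ₁ θ₂ α hx0
    hγ₁ hθ₁ hv hθ₂ hw hα hxs ca hca
end
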